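/- arXiv:1706.07159 — 13 statements merged into one kernel-verified Lean document; each statement's English description precedes it below -/
import Mathlib

section
/- Let p be a prime, q = p^m, and n a positive integer. For every finite subgroup G of GL_n(F_q[t]) (invertible n×n matrices over the polynomial ring F_q[t]), the largest divisor of the order #G that is coprime to p divides the product ∏_{s=1}^{n} (q^s − 1). -/
/-!
Reduction modulo `t` maps `G` to `GL_n(F_q)`, and its kernel is a `p`-group: an element
`M ≡ 1 (mod t)` with `M ^ u = 1` satisfies `(∑_{i<u} M ^ i) * (M - 1) = 0`, where the first
factor has constant term `u`, invertible when `p ∤ u`; comparing lowest-order coefficients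
forces `M = 1`. Hence the prime-to-`p` part of `#G` divides that of
`#GL_n(F_q) = q ^ (n(n-1)/2) * ∏_{s=1}^{n} (q^s - 1)`.
-/

open Polynomial

theorem Polynomial.eq_zero_of_mul_eq_zero_of_isLeftRegular_coeff_zero {B : Type*} [Semiring B]
    {S P : B[X]} (h : S * P = 0) (hS : IsLeftRegular (S.coeff 0)) : P = 0 := by
  nontriviality B
  have hS0 : S.natTrailingDegree = 0 := natTrailingDegree_eq_zero.2 (Or.inr hS.ne_zero)
  have hcoeff := coeff_mul_natTrailingDegree_add_natTrailingDegree (p := S) (q := P)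
  rw [h, hS0, trailingCoeff, hS0, coeff_zero] at hcoeff
  exact trailingCoeff_eq_zero.1 (hS (hcoeff.symm.trans (mul_zero _).symm))

theorem Polynomial.eq_one_of_pow_eq_one_of_constantCoeff_eq_one {B : Type*} [Ring B]
    {M : B[X]} {u : ℕ}
    (h0 : constantCoeff M = 1) (hu : IsLeftRegular (u : B)) (hM : M ^ u = 1) : M = 1 := by
  have hS : (∑ i ∈ Finset.range u, M ^ i).coeff 0 = u := by
    simp only [← constantCoeff_apply, map_sum, map_pow, h0, one_pow, Finset.sum_const,
      Finset.card_range, nsmul_one]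
  refine sub_eq_zero.1 (eq_zero_of_mul_eq_zero_of_isLeftRegular_coeff_zero ?_ (by rwa [hS]))
  rw [geom_sum_mul, hM, sub_self]

theorem Matrix.GeneralLinearGroup.eq_one_of_pow_eq_one_of_map_constantCoeff
    {R n : Type*} [CommRing R] [Fintype n] [DecidableEq n] {g : GL n R[X]} {u : ℕ}
    (hg : Matrix.GeneralLinearGroup.map constantCoeff g = 1) (hu : IsUnit (u : R))
    (hgu : g ^ u = 1) : g = 1 := by
  have h0 : constantCoeff (matPolyEquiv (g : Matrix n n R[X])) = 1 := by
    ext i j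
    simpa using congr($hg i j)
  have hu' : IsLeftRegular (u : Matrix n n R) :=
    (map_natCast (algebraMap R (Matrix n n R)) u ▸ hu.map _).isRegular.left
  have hpow : matPolyEquiv (g : Matrix n n R[X]) ^ u = 1 := by
    rw [← map_pow, ← Units.val_pow_eq_pow_val, hgu, Units.val_one, map_one]
  have hM : matPolyEquiv (g : Matrix n n R[X]) = 1 :=
    eq_one_of_pow_eq_one_of_constantCoeff_eq_one h0 hu' hpow
  exact Units.ext (matPolyEquiv.injective (hM.trans (map_one _).symm))

theorem Nat.prod_range_pow_sub_pow (q n : ℕ) :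
    ∏ i ∈ Finset.range n, (q ^ n - q ^ i) =
      q ^ (∑ i ∈ Finset.range n, i) * ∏ s ∈ Finset.Icc 1 n, (q ^ s - 1) := by
  induction n with
  | zero => simp
  | succ n ih =>
    have hstep : ∀ i ∈ Finset.range n, q ^ (n + 1) - q ^ (i + 1) = q * (q ^ n - q ^ i) :=
      fun i _ => by rw [pow_succ', pow_succ', Nat.mul_sub]
    rw [Finset.prod_range_succ', Finset.prod_congr rfl hstep, Finset.prod_mul_distrib,
      Finset.prod_const, Finset.card_range, ih, Finset.sum_range_succ,
      Finset.prod_Icc_succ_top (by omega), pow_zero]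
    ring

theorem IsPGroup.of_forall_pow_eq_one {H : Type*} [Group H] [Finite H] {p : ℕ} (hp : p.Prime)
    (h : ∀ g : H, ∀ u, ¬ p ∣ u → g ^ u = 1 → g = 1) : IsPGroup p H := fun g =>
  ⟨(orderOf g).factorization p, h _ _ (Nat.not_dvd_ordCompl hp (orderOf_pos g).ne')
    (by rw [← pow_mul, Nat.ordProj_mul_ordCompl_eq_self, pow_orderOf_eq_one])⟩

theorem MonoidHom.ordCompl_card_dvd_of_isPGroup_ker {G H : Type*} [Group G] [Group H]
    [Finite G] [Finite H] {p : ℕ} (hp : p.Prime) (ψ : G →* H) (hker : IsPGroup p ψ.ker) :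
    ordCompl[p] (Nat.card G) ∣ ordCompl[p] (Nat.card H) := by
  have := Fact.mk hp
  obtain ⟨k, hk⟩ := IsPGroup.iff_card.1 hker
  rw [← ψ.ker.card_mul_index, Subgroup.index_ker, hk, Nat.ordCompl_self_pow_mul _ _ hp]
  exact Nat.ordCompl_dvd_ordCompl_of_dvd (Subgroup.card_subgroup_dvd_card _) p

theorem Matrix.ordCompl_card_GL_field_dvd {K : Type*} [Field K] [Fintype K] {p m : ℕ}
    (hp : p.Prime) (hq : Fintype.card K = p ^ m) (n : ℕ) :
    ordCompl[p] (Nat.card (GL (Fin n) K)) ∣ ∏ s ∈ Finset.Icc 1 n, (Fintype.card K ^ s - 1) := by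
  rw [Matrix.card_GL_field, Fin.prod_univ_eq_prod_range (fun i ↦ Fintype.card K ^ n - _ ^ i),
    Nat.prod_range_pow_sub_pow, hq, ← pow_mul, Nat.ordCompl_self_pow_mul _ _ hp]
  exact Nat.ordCompl_dvd _ p

theorem finite_subgroup_GL_polynomial_ordCompl_dvd_general
    (p m : ℕ) (hp : p.Prime)
    (Fq : Type) [Field Fq] [Fintype Fq] (hq : Fintype.card Fq = p ^ m)
    (n : ℕ)
    (G : Subgroup (GL (Fin n) (Polynomial Fq))) (hG : Finite G) :
    ordCompl[p] (Nat.card G) ∣ ∏ s ∈ Finset.Icc 1 n, (Fintype.card Fq ^ s - 1) := by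
  have := Fact.mk hp
  have := charP_of_card_eq_prime_pow hq
  let ψ : G →* GL (Fin n) Fq := (Matrix.GeneralLinearGroup.map constantCoeff).comp G.subtype
  have hker : IsPGroup p ψ.ker := IsPGroup.of_forall_pow_eq_one hp fun x u hu hxu => by
    have hx : ((x : G) : GL (Fin n) Fq[X]) = 1 :=
      Matrix.GeneralLinearGroup.eq_one_of_pow_eq_one_of_map_constantCoeff x.2
        (Ne.isUnit ((CharP.cast_eq_zero_iff Fq p u).not.2 hu))
        (by exact_mod_cast congr((($hxu : G) : GL (Fin n) Fq[X])))
    exact_mod_cast hx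
  exact (ψ.ordCompl_card_dvd_of_isPGroup_ker hp hker).trans
    (Matrix.ordCompl_card_GL_field_dvd hp hq n)

/-- Let `p` be a prime, `q = p^m`, and `n` a positive integer. For every
finite subgroup `G` of `GL n (F_q[t])`, the largest divisor of `#G` coprime to `p`
(i.e. the prime-to-`p` part `ordCompl[p] #G`) divides `∏_{s=1}^{n} (q^s − 1)`. -/
theorem finite_subgroup_GL_polynomial_ordCompl_dvd
    (p m : ℕ) (hp : p.Prime) (hm : 0 < m)
    (Fq : Type) [Field Fq] [Fintype Fq] (hq : Fintype.card Fq = p ^ m)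
    (n : ℕ) (hn : 0 < n)
    (G : Subgroup (GL (Fin n) (Polynomial Fq))) (hG : Finite G) :
    ordCompl[p] (Nat.card G) ∣ ∏ s ∈ Finset.Icc 1 n, (Fintype.card Fq ^ s - 1) :=
  finite_subgroup_GL_polynomial_ordCompl_dvd_general p m hp Fq hq n G hG
end

section
/- Let p be a prime, q = p^m, and n a positive integer. Let Γ_n be the kernel of the group homomorphism GL_n(F_q[[t]]) → GL_n(F_q) induced by the constant-coefficient ring homomorphism F_q[[t]] → F_q (t ↦ 0). Then every finite subgroup of Γ_n is a p-group; equivalently, every element of Γ_n of finite order has order a power of p. -/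
/-!
Write `g = 1 + M` with `M` divisible by `t`. If `g ^ ℓ = 1` with `ℓ` prime to `p`, the binomial
expansion gives `ℓ M = M² v`, so `M = M² u` as `ℓ` is invertible, and then
`M = M ^ (k + 1) u ^ k` for every `k`. The entries of `M` are thus divisible by every power of `t`,
and `M = 0`. Hence the kernel has no `r`-torsion for primes `r ≠ p`, so every element of finite
order has `p`-power order.
-/

open PowerSeries

theorem exists_eq_mul_self_mul_of_one_add_pow_eq_one {A : Type*} [Ring A] {ℓ : ℕ}
    (hℓ : IsUnit (ℓ : A)) {a : A} (h : (1 + a) ^ ℓ = 1) : ∃ u, a = a * a * u := by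
  -- `(1 + X) ^ ℓ ≡ 1 + ℓ X [mod X²]` in `ℤ[X]`, evaluated at `a`
  obtain ⟨q, hq⟩ := sq_dvd_add_pow_sub_sub (Polynomial.X : Polynomial ℤ) 1 ℓ
  have hq' := congrArg (Polynomial.aeval a) hq
  simp only [one_pow, one_mul, map_sub, map_pow, map_add, map_one, map_mul, map_natCast,
    Polynomial.aeval_X, h, sub_sub_cancel_left] at hq'
  refine ⟨-(Polynomial.aeval a q * ↑hℓ.unit⁻¹), ?_⟩
  rw [mul_neg, ← mul_assoc, ← sq, ← hq', neg_mul, neg_neg, mul_assoc, IsUnit.mul_val_inv,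
    mul_one]

theorem eq_pow_succ_mul_pow_of_eq_mul_self_mul {M : Type*} [Monoid M] {a u : M}
    (h : a = a * a * u) (k : ℕ) : a = a ^ (k + 1) * u ^ k := by
  induction k with
  | zero => simp
  | succ k ih =>
    calc a = a ^ k * a * u ^ k := by rwa [← pow_succ]
      _ = a ^ k * (a * a * u) * u ^ k := by rw [← h]
      _ = a ^ (k + 2) * u ^ (k + 1) := by rw [pow_succ' u k]; simp only [pow_succ, mul_assoc]

theorem PowerSeries.eq_zero_of_forall_X_pow_dvd {R : Type*} [Semiring R] {φ : R⟦X⟧}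
    (h : ∀ k, (X : R⟦X⟧) ^ k ∣ φ) : φ = 0 := by
  ext d
  exact X_pow_dvd_iff.mp (h (d + 1)) d d.lt_succ_self

theorem Matrix.X_smul_eq_zero_of_one_add_X_smul_pow_eq_one {R ι : Type*} [CommRing R]
    [Fintype ι] [DecidableEq ι] {N : Matrix ι ι R⟦X⟧} {ℓ : ℕ} (hℓ : IsUnit (ℓ : R))
    (h : (1 + (X : R⟦X⟧) • N) ^ ℓ = 1) : (X : R⟦X⟧) • N = 0 := by
  have hℓ' : IsUnit (ℓ : Matrix ι ι R⟦X⟧) := by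
    simpa using hℓ.map (algebraMap R (Matrix ι ι R⟦X⟧))
  obtain ⟨u, hu⟩ := exists_eq_mul_self_mul_of_one_add_pow_eq_one hℓ' h
  ext1 i j
  refine eq_zero_of_forall_X_pow_dvd fun k => ?_
  rw [eq_pow_succ_mul_pow_of_eq_mul_self_mul hu k, smul_pow, smul_mul_assoc, Matrix.smul_apply,
    smul_eq_mul]
  exact (pow_dvd_pow X k.le_succ).mul_right _

theorem Matrix.GeneralLinearGroup.exists_eq_one_add_X_smul_of_mem_ker {R ι : Type*}
    [CommRing R] [Fintype ι] [DecidableEq ι] {g : GL ι R⟦X⟧}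
    (hg : g ∈ (GeneralLinearGroup.map (constantCoeff (R := R))).ker) :
    ∃ N : Matrix ι ι R⟦X⟧, (g : Matrix ι ι R⟦X⟧) = 1 + (X : R⟦X⟧) • N := by
  have hdvd : ∀ i j, X ∣ ((g : Matrix ι ι R⟦X⟧) - 1) i j := fun i j => by
    rw [X_dvd_iff, Matrix.sub_apply, map_sub, ← GeneralLinearGroup.map_apply,
      MonoidHom.mem_ker.mp hg]
    by_cases hij : i = j <;> simp [Matrix.one_apply, hij]
  choose N hN using hdvd
  exact ⟨Matrix.of N, by ext i j; simp [← hN]⟩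

theorem Matrix.GeneralLinearGroup.eq_one_of_mem_ker_of_pow_eq_one {R ι : Type*} [CommRing R]
    [Fintype ι] [DecidableEq ι] {g : GL ι R⟦X⟧}
    (hg : g ∈ (GeneralLinearGroup.map (constantCoeff (R := R))).ker) {ℓ : ℕ}
    (hℓ : IsUnit (ℓ : R)) (h : g ^ ℓ = 1) : g = 1 := by
  obtain ⟨N, hN⟩ := exists_eq_one_add_X_smul_of_mem_ker hg
  have hpow : (1 + (X : R⟦X⟧) • N) ^ ℓ = 1 := by
    rw [← hN, ← Units.val_pow_eq_pow_val, h, Units.val_one]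
  ext1
  rw [hN, X_smul_eq_zero_of_one_add_X_smul_pow_eq_one hℓ hpow, add_zero, Units.val_one]

theorem Subgroup.exists_orderOf_eq_prime_pow_of_mem {G : Type*} [Group G] {p : ℕ}
    (K : Subgroup G) (hK : ∀ r, r.Prime → r ≠ p → ∀ y ∈ K, y ^ r = 1 → y = 1) {x : G}
    (hx : x ∈ K) (hfin : IsOfFinOrder x) : ∃ k, orderOf x = p ^ k := by
  have hN : orderOf x ≠ 0 := hfin.orderOf_pos.ne'
  refine ⟨_, Nat.eq_prime_pow_of_unique_prime_dvd hN fun {r} hr hrd => ?_⟩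
  by_contra hrp
  have horder := orderOf_pow_orderOf_div hN hrd
  have hpow := pow_orderOf_eq_one (x ^ (orderOf x / r))
  rw [horder] at hpow
  have hy : x ^ (orderOf x / r) = 1 := hK r hr hrp _ (K.pow_mem hx _) hpow
  rw [hy, orderOf_one] at horder
  exact hr.one_lt.ne horder

theorem CharP.isUnit_natCast_of_prime_ne {K : Type*} [DivisionRing K] {p r : ℕ} [CharP K p]
    (hp : p.Prime) (hr : r.Prime) (hrp : r ≠ p) : IsUnit (r : K) :=
  isUnit_iff_ne_zero.mpr <| (CharP.cast_eq_zero_iff K p r).not.mpr fun hpr =>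
    hrp ((Nat.prime_dvd_prime_iff_eq hp hr).mp hpr).symm

theorem kernel_GL_powerSeries_to_GL_residue_isPGroup_general
    (p m : ℕ) (hp : p.Prime)
    (Fq : Type) [Field Fq] [Fintype Fq] (hq : Fintype.card Fq = p ^ m)
    (n : ℕ) :
    (∀ H : Subgroup (GL (Fin n) (PowerSeries Fq)),
      H ≤ (Matrix.GeneralLinearGroup.map (n := Fin n) (PowerSeries.constantCoeff (R := Fq))).ker →
      Finite H → IsPGroup p H) ∧
    (∀ x : GL (Fin n) (PowerSeries Fq),
      x ∈ (Matrix.GeneralLinearGroup.map (n := Fin n) (PowerSeries.constantCoeff (R := Fq))).ker →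
      IsOfFinOrder x → ∃ k : ℕ, orderOf x = p ^ k) := by
  have : Fact p.Prime := ⟨hp⟩
  have : CharP Fq p := charP_of_card_eq_prime_pow hq
  have hK : ∀ r, r.Prime → r ≠ p →
      ∀ y ∈ (Matrix.GeneralLinearGroup.map (n := Fin n) (constantCoeff (R := Fq))).ker,
        y ^ r = 1 → y = 1 := fun r hr hrp _ hy =>
    Matrix.GeneralLinearGroup.eq_one_of_mem_ker_of_pow_eq_one hy
      (CharP.isUnit_natCast_of_prime_ne hp hr hrp)
  have horderOf := fun x hx hfin =>
    Subgroup.exists_orderOf_eq_prime_pow_of_mem _ hK (x := x) hx hfin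
  refine ⟨fun H hH _ => IsPGroup.iff_orderOf.mpr fun g => ?_, horderOf⟩
  rw [← Subgroup.orderOf_coe]
  exact horderOf g (hH g.2) (Submonoid.isOfFinOrder_coe.mpr (isOfFinOrder_of_finite g))

/-- Let `Γ_n` be the kernel of `GL_n(F_q[[t]]) → GL_n(F_q)` induced by
the constant-coefficient map. Then every finite subgroup of `Γ_n` is a `p`-group;
equivalently, every element of `Γ_n` of finite order has order a power of `p`. -/
theorem kernel_GL_powerSeries_to_GL_residue_isPGroup
    (p m : ℕ) (hp : p.Prime) (hm : 0 < m)
    (Fq : Type) [Field Fq] [Fintype Fq] (hq : Fintype.card Fq = p ^ m)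
    (n : ℕ) (hn : 0 < n) :
    (∀ H : Subgroup (GL (Fin n) (PowerSeries Fq)),
      H ≤ (Matrix.GeneralLinearGroup.map (n := Fin n) (PowerSeries.constantCoeff (R := Fq))).ker →
      Finite H → IsPGroup p H) ∧
    (∀ x : GL (Fin n) (PowerSeries Fq),
      x ∈ (Matrix.GeneralLinearGroup.map (n := Fin n) (PowerSeries.constantCoeff (R := Fq))).ker →
      IsOfFinOrder x → ∃ k : ℕ, orderOf x = p ^ k) :=
  kernel_GL_powerSeries_to_GL_residue_isPGroup_general p m hp Fq hq n
end

section
/- Let p be a prime, q = p^m, F = F_q(t) the rational function field, and K a finite field extension of F whose inseparable degree over F equals p^ν. Then the separable closure of F in K coincides, as a subset of K, with the set K^{p^ν} = { x^{p^ν} : x ∈ K } of p^ν-th powers of elements of K. -/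
open Module Polynomial

noncomputable section FrobAux

/-- A type synonym used to endow a field `F` with the module structure over itself
given by the iterated Frobenius map. -/
def FrobTwist (F : Type) : Type := F

instance (F : Type) [Field F] : Field (FrobTwist F) := ‹Field F›

/-- The identity, as a ring equivalence `F ≃+* FrobTwist F`. -/
def frobTwistEquiv (F : Type) [Field F] : F ≃+* FrobTwist F := RingEquiv.refl F

attribute [irreducible] FrobTwist

/-- Over a finite field of characteristic `p`, every polynomial is a combination
`∑ cᵢ^(p^N) Xⁱ` for `i < p^N`. -/
theorem poly_pow_decomp (Fq : Type) [Field Fq] [Fintype Fq] (p : ℕ) (hp : p.Prime)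
    [CharP Fq p] (N : ℕ) (f : Polynomial Fq) :
    ∃ c : Fin (p ^ N) → Polynomial Fq,
      f = ∑ i : Fin (p ^ N), (c i) ^ (p ^ N) * Polynomial.X ^ (i : ℕ) := by
  haveI : Fact p.Prime := ⟨hp⟩
  haveI : CharP (Polynomial Fq) p := inferInstance
  haveI : ExpChar (Polynomial Fq) p := inferInstance
  have q1 : 0 < p ^ N := pow_pos hp.pos N
  induction f using Polynomial.induction_on' with
  | add f g hf hg =>
    obtain ⟨cf, hcf⟩ := hf
    obtain ⟨cg, hcg⟩ := hg
    refine ⟨cf + cg, ?_⟩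
    have key : ∀ i : Fin (p ^ N), ((cf + cg) i) ^ (p ^ N)
        = cf i ^ (p ^ N) + cg i ^ (p ^ N) := fun i => by
      rw [Pi.add_apply]
      exact add_pow_expChar_pow (cf i) (cg i) p N
    simp only [key, add_mul, Finset.sum_add_distrib]
    rw [← hcf, ← hcg]
  | monomial n a =>
    obtain ⟨b, hb⟩ := (bijective_iterateFrobenius Fq p N).2 a
    rw [iterateFrobenius_def] at hb
    refine ⟨Pi.single ⟨n % p ^ N, Nat.mod_lt _ q1⟩ (Polynomial.C b * Polynomial.X ^ (n / p ^ N)),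
      ?_⟩
    rw [Finset.sum_eq_single (⟨n % p ^ N, Nat.mod_lt _ q1⟩ : Fin (p ^ N))]
    · rw [Pi.single_eq_same, mul_pow, ← Polynomial.C_pow, hb, ← pow_mul,
        mul_assoc, ← pow_add]
      show (Polynomial.monomial n) a = Polynomial.C a * Polynomial.X ^ (n / p ^ N * p ^ N + n % p ^ N)
      rw [Nat.div_add_mod', Polynomial.C_mul_X_pow_eq_monomial]
    · intro j _ hj
      rw [Pi.single_eq_of_ne hj, zero_pow q1.ne', zero_mul]
    · intro h
      exact absurd (Finset.mem_univ _) h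

/-- Every rational function over a finite field of characteristic `p` is a combination
`∑ cᵢ^(p^N) Xⁱ` for `i < p^N`. -/
theorem ratfunc_pow_decomp (Fq : Type) [Field Fq] [Fintype Fq] (p : ℕ) (hp : p.Prime)
    [CharP Fq p] (N : ℕ) (z : RatFunc Fq) :
    ∃ c : Fin (p ^ N) → RatFunc Fq,
      z = ∑ i : Fin (p ^ N), (c i) ^ (p ^ N) * (RatFunc.X : RatFunc Fq) ^ (i : ℕ) := by
  have q1 : 0 < p ^ N := pow_pos hp.pos N
  have hg : z.denom ≠ 0 := z.denom_ne_zero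
  have hG : algebraMap (Polynomial Fq) (RatFunc Fq) z.denom ≠ 0 := RatFunc.algebraMap_ne_zero hg
  obtain ⟨c, hc⟩ := poly_pow_decomp Fq p hp N (z.num * z.denom ^ (p ^ N - 1))
  refine ⟨fun i => algebraMap _ _ (c i) / algebraMap _ _ z.denom, ?_⟩
  have key : z = algebraMap (Polynomial Fq) (RatFunc Fq) (z.num * z.denom ^ (p ^ N - 1)) /
      (algebraMap (Polynomial Fq) (RatFunc Fq) z.denom) ^ (p ^ N) := by
    conv_lhs => rw [← RatFunc.num_div_denom z]
    rw [map_mul, map_pow, div_eq_div_iff hG (pow_ne_zero _ hG), mul_assoc, ← pow_succ,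
      Nat.sub_add_cancel q1]
  conv_lhs => rw [key, hc, map_sum]
  rw [Finset.sum_div]
  refine Finset.sum_congr rfl fun i _ => ?_
  rw [map_mul, map_pow, map_pow, RatFunc.algebraMap_X, div_pow, div_mul_eq_mul_div]

end FrobAux

set_option synthInstance.maxHeartbeats 1000000 in
set_option maxHeartbeats 2000000 in
/-- Let `F = F_q(t)` and `K` a finite extension of `F` whose inseparable
degree `[K:F]_i = [K:F]/[K:F]_s` equals `p^ν`. Then the separable closure of `F` in `K`
coincides, as a subset of `K`, with the set of `p^ν`-th powers of elements of `K`. -/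
theorem separableClosure_eq_pow_insepDegree
    (p m : ℕ) (hp : p.Prime) (hm : 0 < m)
    (Fq : Type) [Field Fq] [Fintype Fq] (hq : Fintype.card Fq = p ^ m)
    (K : Type) [Field K] [Algebra (RatFunc Fq) K] [FiniteDimensional (RatFunc Fq) K]
    (ν : ℕ)
    (hinsep : Module.finrank (RatFunc Fq) K =
      Field.finSepDegree (RatFunc Fq) K * p ^ ν) :
    (separableClosure (RatFunc Fq) K : Set K) = {y : K | ∃ x : K, x ^ p ^ ν = y} := by
  haveI : Fact p.Prime := ⟨hp⟩
  set F := RatFunc Fq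
  -- characteristic bookkeeping
  haveI hcharFq : CharP Fq p := by
    obtain ⟨n, hr, hcard⟩ := FiniteField.card Fq (ringChar Fq)
    have hpr : p = ringChar Fq := by
      have : p ∣ ringChar Fq ^ (n : ℕ) := by
        rw [← hcard, hq]
        exact dvd_pow_self p hm.ne'
      exact (Nat.prime_dvd_prime_iff_eq hp hr).mp (hp.dvd_of_dvd_pow this)
    rw [hpr]; infer_instance
  haveI hcharF : CharP F p :=
    charP_of_injective_algebraMap (algebraMap Fq F).injective p
  haveI hcharK : CharP K p :=
    charP_of_injective_algebraMap (algebraMap F K).injective p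
  haveI : ExpChar F p := inferInstance
  haveI : ExpChar K p := inferInstance
  have hq'pos : 0 < p ^ ν := pow_pos hp.pos ν
  set S := separableClosure F K with hS
  haveI : ExpChar S p := inferInstance
  -- Step B : [K : S] = (p ^ ν)
  have hSK : finrank S K = (p ^ ν) := by
    have h := Field.finSepDegree_mul_finInsepDegree F K
    rw [hinsep] at h
    have hpos : 0 < Field.finSepDegree F K :=
      Nat.pos_of_ne_zero (NeZero.ne _)
    exact Nat.eq_of_mul_eq_mul_left hpos h
  -- Step C : every (p ^ ν)-th power lies in S
  have hTS : ∀ x : K, x ^ (p ^ ν) ∈ S := by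
    intro x
    haveI : IsPurelyInseparable S K := separableClosure.isPurelyInseparable F K
    obtain ⟨k, a, hmin⟩ := IsPurelyInseparable.minpoly_eq_X_pow_sub_C S p x
    have hint : IsIntegral S x := IsIntegral.of_finite S x
    have hdvd : (minpoly S x).natDegree ∣ finrank S K := minpoly.degree_dvd hint
    rw [hmin, Polynomial.natDegree_X_pow_sub_C, hSK] at hdvd
    have hk : k ≤ ν := (Nat.pow_dvd_pow_iff_le_right hp.one_lt).mp hdvd
    have heq : x ^ p ^ k = algebraMap S K a := by
      have := minpoly.aeval S x
      rw [hmin, map_sub, map_pow, Polynomial.aeval_X, Polynomial.aeval_C,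
        sub_eq_zero] at this
      exact this
    have : x ^ (p ^ ν) = algebraMap S K (a ^ p ^ (ν - k)) := by
      rw [map_pow, ← heq, ← pow_mul, ← pow_add, Nat.add_sub_cancel' hk]
    rw [this]
    exact (a ^ p ^ (ν - k)).2
  -- the subfield of (p ^ ν)-th powers
  set ψ : K →+* K := iterateFrobenius K p ν with hψ
  have hψ_def : ∀ x : K, ψ x = x ^ p ^ ν := fun x => rfl
  set T : Subfield K := ψ.fieldRange with hT
  -- Step D : counting.  Twisted base field.
  letI algWF : Algebra (FrobTwist F) F :=
    ((iterateFrobenius F p ν).comp (frobTwistEquiv F).symm.toRingHom).toAlgebra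
  letI algWK : Algebra (FrobTwist F) K :=
    ((algebraMap F K).comp (algebraMap (FrobTwist F) F)).toAlgebra
  haveI : IsScalarTower (FrobTwist F) F K := IsScalarTower.of_algebraMap_eq' rfl
  have hWT_mem : ∀ w : FrobTwist F, algebraMap (FrobTwist F) K w ∈ T := by
    intro w
    refine ⟨algebraMap F K ((frobTwistEquiv F).symm w), ?_⟩
    show (algebraMap F K ((frobTwistEquiv F).symm w)) ^ (p ^ ν) = _
    show _ = algebraMap F K (((frobTwistEquiv F).symm w) ^ (p ^ ν))
    rw [map_pow]
  letI algWT : Algebra (FrobTwist F) T :=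
    ((algebraMap (FrobTwist F) K).codRestrict T.toSubring hWT_mem).toAlgebra
  haveI : IsScalarTower (FrobTwist F) T K :=
    IsScalarTower.of_algebraMap_eq' rfl
  -- spanning : F is spanned over the twist by X^i, i < (p ^ ν)
  have hspan : Submodule.span (FrobTwist F)
      (Set.range fun i : Fin (p ^ ν) => (RatFunc.X : F) ^ (i : ℕ)) = ⊤ := by
    rw [Submodule.eq_top_iff']
    intro z
    obtain ⟨c, hc⟩ := ratfunc_pow_decomp Fq p hp ν z
    rw [hc]
    refine Submodule.sum_mem _ fun i _ => ?_
    have : (c i) ^ (p ^ ν) * (RatFunc.X : F) ^ (i : ℕ)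
        = (frobTwistEquiv F (c i)) • ((RatFunc.X : F) ^ (i : ℕ)) := by
      rw [Algebra.smul_def]
      congr 1
    rw [this]
    exact Submodule.smul_mem _ _ (Submodule.subset_span ⟨i, rfl⟩)
  haveI hFDWF : Module.Finite (FrobTwist F) F := by
    classical
    exact ⟨⟨Finset.univ.image fun i : Fin (p ^ ν) => (RatFunc.X : F) ^ (i : ℕ), by
      rw [Finset.coe_image, Finset.coe_univ, Set.image_univ, hspan]⟩⟩
  have hdle : finrank (FrobTwist F) F ≤ (p ^ ν) := by
    classical
    have h1 : finrank (FrobTwist F)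
        (Submodule.span (FrobTwist F)
          (Set.range fun i : Fin (p ^ ν) => (RatFunc.X : F) ^ (i : ℕ))) ≤ (p ^ ν) := by
      refine le_trans (finrank_span_le_card _) ?_
      rw [Set.toFinset_range]
      exact le_trans (Finset.card_image_le) (by simp)
    rw [hspan, finrank_top] at h1
    exact h1
  haveI hFDWK : Module.Finite (FrobTwist F) K := Module.Finite.trans F K
  haveI hFDTK : FiniteDimensional T K := FiniteDimensional.right (FrobTwist F) T K
  -- the Frobenius equivalence K ≃+* T
  have hψinj : Function.Injective ψ := ψ.injective
  let jT : K ≃+* T := RingEquiv.ofBijective ψ.rangeRestrictField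
    ⟨fun a b hab => hψinj (congrArg Subtype.val hab), by
      rintro ⟨y, x, rfl⟩
      exact ⟨x, rfl⟩⟩
  have hrankWT : finrank (FrobTwist F) T = finrank F K := by
    have h := Algebra.rank_eq_of_equiv_equiv (frobTwistEquiv F) jT (by
      ext x
      show algebraMap F K (x ^ p ^ ν) = ψ (algebraMap F K x)
      rw [map_pow, hψ_def])
    rw [finrank, finrank, h]
  have h1 : finrank (FrobTwist F) F * finrank F K = finrank (FrobTwist F) K :=
    finrank_mul_finrank _ _ _
  have h2 : finrank (FrobTwist F) T * finrank T K = finrank (FrobTwist F) K :=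
    finrank_mul_finrank _ _ _
  have hnpos : 0 < finrank F K := finrank_pos
  have hKT : finrank T K ≤ (p ^ ν) := by
    have e1 : finrank F K * finrank T K = finrank (FrobTwist F) K := by
      rw [← h2, hrankWT]
    have e2 : finrank F K * finrank (FrobTwist F) F = finrank (FrobTwist F) K := by
      rw [← h1, mul_comm]
    have h3 : finrank T K = finrank (FrobTwist F) F :=
      Nat.eq_of_mul_eq_mul_left hnpos (e1.trans e2.symm)
    exact le_trans (le_of_eq h3) hdle
  -- tower T ⊆ S ⊆ K
  letI algTS : Algebra T S :=
    ((Subfield.subtype T).codRestrict S.toSubfield.toSubring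
      (fun x => by
        obtain ⟨z, hz⟩ := x.2
        rw [hψ_def] at hz
        show (x : K) ∈ S
        rw [← hz]
        exact hTS z)).toAlgebra
  haveI : IsScalarTower T S K := IsScalarTower.of_algebraMap_eq' rfl
  haveI hFDTS : FiniteDimensional T S := FiniteDimensional.left T S K
  have h4 : finrank T S * finrank S K = finrank T K := finrank_mul_finrank _ _ _
  have hTS1 : finrank T S = 1 := by
    have hge : 1 ≤ finrank T S := finrank_pos
    have hle' : finrank T S * (p ^ ν) ≤ 1 * (p ^ ν) := by
      rw [one_mul]
      have h4' := h4
      rw [hSK] at h4'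
      rw [h4']
      exact hKT
    exact le_antisymm (Nat.le_of_mul_le_mul_right hle' hq'pos) hge
  have hbot : (⊥ : Subalgebra T S) = ⊤ := Subalgebra.bot_eq_top_of_finrank_eq_one hTS1
  ext y
  constructor
  · intro hy
    have hmem : (⟨y, hy⟩ : S) ∈ (⊥ : Subalgebra T S) := hbot.symm ▸ Algebra.mem_top
    rw [Algebra.mem_bot] at hmem
    obtain ⟨t, ht⟩ := hmem
    obtain ⟨x, hx⟩ := t.2
    refine ⟨x, ?_⟩
    have hty : (t : K) = y := congrArg Subtype.val ht
    exact (hψ_def x).symm.trans (hx.trans hty)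
  · rintro ⟨x, rfl⟩
    exact hTS x
end

section
/- Let r = p^ν, let K be a field of characteristic p containing F_q and an element s, and set t := s^r. Let L be any field extension of K. Then for every polynomial a ∈ F_q[X] and every x ∈ L, one has D_t(a)(x^r) = (D_s(â)(x))^r, where â denotes the polynomial obtained from a by applying the inverse of the automorphism y ↦ y^r of F_q to each coefficient. -/
/-- Let `r = p^ν`, `K` a field of characteristic `p` containing `F_q`
and an element `s`, and `t := s^r`. Let `L` be a field extension of `K`. Writing `D_u`
for the unique `F_q`-algebra homomorphism `F_q[X] → End_{F_q}(L)` with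
`D_u(X)(x) = u·x + x^q`, and `â` for the polynomial with `â`'s coefficients the `r`-th
roots of those of `a`, one has `D_t(a)(x^r) = (D_s(â)(x))^r` for all `a ∈ F_q[X]`,
`x ∈ L`. -/
theorem carlitz_twist_pow_compat
    (p m ν : ℕ) (hp : p.Prime) (hm : 0 < m)
    (Fq : Type) [Field Fq] [Fintype Fq] (hq : Fintype.card Fq = p ^ m)
    (K : Type) [Field K] [Algebra Fq K] (hK : CharP K p) (s : K)
    (L : Type) [Field L] [Algebra Fq L] [Algebra K L] [IsScalarTower Fq K L]
    (Dt Ds : Polynomial Fq →ₐ[Fq] Module.End Fq L)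
    (hDt : ∀ x : L,
      Dt Polynomial.X x = algebraMap K L (s ^ p ^ ν) * x + x ^ Fintype.card Fq)
    (hDs : ∀ x : L,
      Ds Polynomial.X x = algebraMap K L s * x + x ^ Fintype.card Fq)
    (hat : Polynomial Fq → Polynomial Fq)
    (hhat : ∀ (a : Polynomial Fq) (k : ℕ), (hat a).coeff k ^ p ^ ν = a.coeff k) :
    ∀ (a : Polynomial Fq) (x : L), Dt a (x ^ p ^ ν) = (Ds (hat a) x) ^ p ^ ν := by
  haveI : CharP L p := charP_of_injective_algebraMap (algebraMap K L).injective p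
  haveI : ExpChar L p := ExpChar.prime hp
  set f : L →+* L := iterateFrobenius L p ν with hfdef
  have hf : ∀ y : L, f y = y ^ p ^ ν := fun y => iterateFrobenius_def (p := p) ν y
  -- key fact on X
  have key : ∀ y : L, Dt Polynomial.X (f y) = f (Ds Polynomial.X y) := by
    intro y
    rw [hDt, hDs, map_add, map_mul, map_pow, hf, hf, hf]
    congr 1
    rw [← pow_mul, ← pow_mul, mul_comm]
  have keyn : ∀ (i : ℕ) (y : L),
      ((Dt Polynomial.X) ^ i) (f y) = f (((Ds Polynomial.X) ^ i) y) := by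
    intro i
    induction i with
    | zero => intro y; simp
    | succ n ih =>
      intro y
      rw [pow_succ', pow_succ', Module.End.mul_apply, Module.End.mul_apply, ih, key]
  -- rewrite Dt and Ds as aeval
  have hDt_eq : Dt = Polynomial.aeval (Dt Polynomial.X) :=
    Polynomial.algHom_ext (by simp)
  have hDs_eq : Ds = Polynomial.aeval (Ds Polynomial.X) :=
    Polynomial.algHom_ext (by simp)
  intro a x
  set N := max a.natDegree (hat a).natDegree + 1 with hN
  have ha : a.natDegree < N := Nat.lt_succ_of_le (le_max_left _ _)
  have hb : (hat a).natDegree < N := Nat.lt_succ_of_le (le_max_right _ _)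
  rw [hDt_eq, hDs_eq, Polynomial.aeval_eq_sum_range' ha,
    Polynomial.aeval_eq_sum_range' hb, ← hf x, ← hf _]
  rw [LinearMap.sum_apply, LinearMap.sum_apply, map_sum]
  refine Finset.sum_congr rfl fun i _ => ?_
  rw [LinearMap.smul_apply, LinearMap.smul_apply, keyn, Algebra.smul_def, Algebra.smul_def,
    map_mul, hf ((algebraMap Fq L) ((hat a).coeff i)), ← map_pow (algebraMap Fq L), hhat]
end

section
/- Let r = p^ν, let K be a field containing F_q and an element s transcendental over F_q, set t := s^r, and let L be a separably closed field extension of K. Then for every nonzero polynomial a ∈ F_q[X], the r-th power map λ ↦ λ^r is a bijection from the kernel {λ ∈ L : D_s(â)(λ) = 0} onto the kernel {δ ∈ L : D_t(a)(δ) = 0}. -/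
/-!
`D_u(b)` is evaluation of an additive polynomial over `L` whose derivative is the constant
`b(u)`. For `u = s` transcendental this constant is nonzero, so the polynomial attached to
`D_s(â)` is separable, splits in `L`, and its roots are the kernel. Raising its coefficients to
the `r`-th power gives the polynomial attached to `D_t(a)`, whose roots are therefore exactly the
`r`-th powers of those of the first one.
-/

open Polynomial

theorem Polynomial.Splits.bijOn_isRoot_map {R S : Type*} [Field R] [Field S] {f : R[X]}
    (hf : f.Splits) (hf0 : f ≠ 0) (i : R →+* S) :
    Set.BijOn i {x | f.IsRoot x} {y | (f.map i).IsRoot y} := by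
  refine ⟨fun x hx => ?_, i.injective.injOn, fun y hy => ?_⟩
  · exact (isRoot_map_iff i.injective).2 hx
  · obtain ⟨x, rfl⟩ := hf.mem_range_of_isRoot hf0 hy
    exact ⟨x, (isRoot_map_iff i.injective).1 hy, rfl⟩

section AdditivePolynomial

variable {F L L' : Type*} [CommSemiring F] [CommSemiring L] [CommSemiring L'] [Algebra F L]
  [Algebra F L']

/-- `gPoly u q k` and `dPoly u q b` are the additive polynomials whose evaluation maps are
`g_u^k` and `D_u(b)`. -/
noncomputable def gPoly (u : L) (q : ℕ) : ℕ → L[X]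
  | 0 => X
  | k + 1 => (gPoly u q k).comp (C u * X + X ^ q)

noncomputable def dPoly (u : L) (q : ℕ) (b : F[X]) : L[X] :=
  ∑ k ∈ b.support, C (algebraMap F L (b.coeff k)) * gPoly u q k

theorem eval_gPoly (u : L) (q k : ℕ) (x : L) :
    (gPoly u q k).eval x = (fun y => u * y + y ^ q)^[k] x := by
  induction k generalizing x with
  | zero => simp [gPoly]
  | succ k ih => simp [gPoly, ih]

theorem derivative_gPoly (u : L) {q : ℕ} (hq : (q : L) = 0) (k : ℕ) :
    derivative (gPoly u q k) = C (u ^ k) := by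
  induction k with
  | zero => simp [gPoly]
  | succ k ih =>
    have hg : derivative (C u * X + X ^ q) = C u := by simp [derivative_X_pow, hq]
    rw [gPoly, derivative_comp, ih, hg, C_comp, ← C_mul, pow_succ']

theorem map_gPoly (φ : L →+* L') (u : L) (q k : ℕ) :
    (gPoly u q k).map φ = gPoly (φ u) q k := by
  induction k with
  | zero => simp [gPoly]
  | succ k ih => simp [gPoly, map_comp, ih]

theorem eval_dPoly {u : L} {q : ℕ} (D : F[X] →ₐ[F] Module.End F L)
    (hD : ∀ x, D X x = u * x + x ^ q) (b : F[X]) (x : L) :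
    D b x = (dPoly u q b).eval x := by
  have hDX : ⇑(D X) = fun y => u * y + y ^ q := funext hD
  have hDaeval : D = aeval (D X) := algHom_ext (aeval_X _).symm
  conv_lhs => rw [hDaeval, b.as_sum_support]
  simp [dPoly, eval_finsetSum, eval_gPoly, Module.End.pow_apply, hDX, Algebra.smul_def]

theorem derivative_dPoly (u : L) {q : ℕ} (hq : (q : L) = 0) (b : F[X]) :
    derivative (dPoly u q b) = C (aeval u b) := by
  conv_rhs => rw [b.as_sum_support]
  simp [dPoly, derivative_gPoly u hq]

theorem map_dPoly (φ : L →+* L') {fr : F →+* F} (hfr : Function.Injective fr)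
    (hφ : ∀ c, φ (algebraMap F L c) = algebraMap F L' (fr c)) (u : L) (q : ℕ) (b : F[X]) :
    (dPoly u q b).map φ = dPoly (φ u) q (b.map fr) := by
  simp [dPoly, Polynomial.map_sum, support_map_of_injective _ hfr, map_gPoly, hφ]

end AdditivePolynomial

theorem separable_dPoly {F L : Type*} [CommSemiring F] [Field L] [Algebra F L] {u : L} {q : ℕ}
    (hq : (q : L) = 0) {b : F[X]} (hub : aeval u b ≠ 0) : (dPoly u q b).Separable :=
  ⟨0, C (aeval u b)⁻¹, by rw [derivative_dPoly u hq, zero_mul, zero_add, ← C_mul,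
    inv_mul_cancel₀ hub, C_1]⟩

theorem bijOn_pow_ker_of_aeval_ne_zero {F L : Type*} [Field F] [Field L] [Algebra F L]
    [IsSepClosed L] {p : ℕ} [ExpChar F p] [ExpChar L p] (ν : ℕ) {q : ℕ} (hq : (q : L) = 0)
    {u : L} {b : F[X]} (hub : aeval u b ≠ 0) (Ds Dt : F[X] →ₐ[F] Module.End F L)
    (hDs : ∀ x, Ds X x = u * x + x ^ q) (hDt : ∀ x, Dt X x = u ^ p ^ ν * x + x ^ q) :
    Set.BijOn (fun x => x ^ p ^ ν) {x | Ds b x = 0}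
      {y | Dt (b.map (iterateFrobenius F p ν)) y = 0} := by
  have hsep := separable_dPoly hq hub
  have hmap : (dPoly u q b).map (iterateFrobenius L p ν) =
      dPoly (u ^ p ^ ν) q (b.map (iterateFrobenius F p ν)) :=
    map_dPoly _ (iterateFrobenius F p ν).injective (fun c => (map_pow _ c _).symm) u q b
  simp_rw [eval_dPoly Ds hDs, eval_dPoly Dt hDt, ← hmap]
  exact (IsSepClosed.splits_of_separable _ hsep).bijOn_isRoot_map hsep.ne_zero _

theorem carlitz_twist_torsion_pow_bijOn_general
    (p m ν : ℕ) (hp : p.Prime)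
    (Fq : Type) [Field Fq] [Fintype Fq] (hq : Fintype.card Fq = p ^ m)
    (K : Type) [Field K] [Algebra Fq K] (s : K) (hs : Transcendental Fq s)
    (L : Type) [Field L] [Algebra Fq L] [Algebra K L] [IsScalarTower Fq K L]
    [IsSepClosed L]
    (Dt Ds : Polynomial Fq →ₐ[Fq] Module.End Fq L)
    (hDt : ∀ x : L,
      Dt Polynomial.X x = algebraMap K L (s ^ p ^ ν) * x + x ^ Fintype.card Fq)
    (hDs : ∀ x : L,
      Ds Polynomial.X x = algebraMap K L s * x + x ^ Fintype.card Fq)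
    (hat : Polynomial Fq → Polynomial Fq)
    (hhat : ∀ (a : Polynomial Fq) (k : ℕ), (hat a).coeff k ^ p ^ ν = a.coeff k) :
    ∀ a : Polynomial Fq, a ≠ 0 →
      Set.BijOn (fun lam : L => lam ^ p ^ ν)
        {lam : L | Ds (hat a) lam = 0} {del : L | Dt a del = 0} := by
  intro a ha
  have : Fact p.Prime := ⟨hp⟩
  have : CharP Fq p := charP_of_card_eq_prime_pow hq
  have : ExpChar L p := expChar_of_injective_algebraMap (algebraMap Fq L).injective p
  have hmap : (hat a).map (iterateFrobenius Fq p ν) = a := by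
    ext k
    rw [coeff_map, iterateFrobenius_def, hhat]
  have hqL : (Fintype.card Fq : L) = 0 := by
    rw [← map_natCast (algebraMap Fq L), Nat.cast_card_eq_zero, map_zero]
  have hst : Transcendental Fq (algebraMap K L s) :=
    (transcendental_algebraMap_iff (algebraMap K L).injective).2 hs
  have hub : aeval (algebraMap K L s) (hat a) ≠ 0 := fun h =>
    ha (by rw [← hmap, transcendental_iff.1 hst _ h, Polynomial.map_zero])
  have hbij := bijOn_pow_ker_of_aeval_ne_zero ν hqL hub Ds Dt hDs (by simpa [map_pow] using hDt)
  rwa [hmap] at hbij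

/-- Let `r = p^ν`, `K` a field containing `F_q` and an element `s`
transcendental over `F_q`, `t := s^r`, and `L` a separably closed field extension of `K`.
Then for every nonzero `a ∈ F_q[X]`, the `r`-th power map is a bijection from
`{λ ∈ L : D_s(â)(λ) = 0}` onto `{δ ∈ L : D_t(a)(δ) = 0}`. -/
theorem carlitz_twist_torsion_pow_bijOn
    (p m ν : ℕ) (hp : p.Prime) (hm : 0 < m)
    (Fq : Type) [Field Fq] [Fintype Fq] (hq : Fintype.card Fq = p ^ m)
    (K : Type) [Field K] [Algebra Fq K] (s : K) (hs : Transcendental Fq s)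
    (L : Type) [Field L] [Algebra Fq L] [Algebra K L] [IsScalarTower Fq K L]
    [IsSepClosed L]
    (Dt Ds : Polynomial Fq →ₐ[Fq] Module.End Fq L)
    (hDt : ∀ x : L,
      Dt Polynomial.X x = algebraMap K L (s ^ p ^ ν) * x + x ^ Fintype.card Fq)
    (hDs : ∀ x : L,
      Ds Polynomial.X x = algebraMap K L s * x + x ^ Fintype.card Fq)
    (hat : Polynomial Fq → Polynomial Fq)
    (hhat : ∀ (a : Polynomial Fq) (k : ℕ), (hat a).coeff k ^ p ^ ν = a.coeff k) :
    ∀ a : Polynomial Fq, a ≠ 0 →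
      Set.BijOn (fun lam : L => lam ^ p ^ ν)
        {lam : L | Ds (hat a) lam = 0} {del : L | Dt a del = 0} :=
  carlitz_twist_torsion_pow_bijOn_general p m ν hp Fq hq K s hs L Dt Ds hDt hDs hat hhat
end

section
/- Let L be a separably closed field containing F_q and an element s transcendental over F_q. For every nonzero polynomial b ∈ F_q[X], the set {λ ∈ L : D_s(b)(λ) = 0} is an F_q-subspace of L with exactly q^{deg b} elements (i.e. of F_q-dimension deg b). -/
/-!
Because `q = 0` in `L`, the iterate `g_s^i` is evaluation of the polynomial `Q_i` given by
`Q_0 = X`, `Q_{i+1} = s Q_i + Q_i^q`, which is monic of degree `q^i` with derivative `s^i`.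
Hence `D_s(b)` is evaluation of `P_b = ∑ b_i Q_i`, of degree `q^{deg b}` and with constant
derivative `b(s)`, nonzero because `s` is transcendental. So `P_b` is separable, and it has
`q^{deg b}` distinct roots in the separably closed field `L`.
-/

open Polynomial

noncomputable def iteratePoly {R : Type*} [CommRing R] (s : R) (q : ℕ) : ℕ → R[X]
  | 0 => X
  | i + 1 => C s * iteratePoly s q i + iteratePoly s q i ^ q

section iteratePoly

variable {R : Type*} [CommRing R] (s : R) {q : ℕ}

@[simp] theorem iteratePoly_zero : iteratePoly s q 0 = X := rfl

@[simp] theorem iteratePoly_succ (i : ℕ) :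
    iteratePoly s q (i + 1) = C s * iteratePoly s q i + iteratePoly s q i ^ q := rfl

theorem monic_iteratePoly_and_natDegree [Nontrivial R] (hq : 2 ≤ q) (i : ℕ) :
    (iteratePoly s q i).Monic ∧ (iteratePoly s q i).natDegree = q ^ i := by
  induction i with
  | zero => simp
  | succ i ih =>
    obtain ⟨hmon, hdeg⟩ := ih
    have hpow : (iteratePoly s q i ^ q).natDegree = q ^ (i + 1) := by
      rw [hmon.natDegree_pow, hdeg, pow_succ, mul_comm]
    have hlt : (C s * iteratePoly s q i).natDegree < (iteratePoly s q i ^ q).natDegree :=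
      (natDegree_C_mul_le _ _).trans_lt <| by
        rw [hdeg, hpow]; exact Nat.pow_lt_pow_right hq i.lt_succ_self
    rw [iteratePoly_succ, natDegree_add_eq_right_of_natDegree_lt hlt, hpow]
    exact ⟨(hmon.pow q).add_of_right (degree_lt_degree hlt), rfl⟩

theorem natDegree_iteratePoly [Nontrivial R] (hq : 2 ≤ q) (i : ℕ) :
    (iteratePoly s q i).natDegree = q ^ i :=
  (monic_iteratePoly_and_natDegree s hq i).2

theorem derivative_iteratePoly (hq : (q : R) = 0) (i : ℕ) :
    derivative (iteratePoly s q i) = C (s ^ i) := by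
  induction i with
  | zero => simp
  | succ i ih =>
    rw [iteratePoly_succ, derivative_add, derivative_C_mul, derivative_pow, ih, hq]
    simp [pow_succ, mul_comm]

theorem pow_apply_eq_eval_iteratePoly {K : Type*} [CommRing K] [Algebra K R] (f : Module.End K R)
    (hf : ∀ x, f x = s * x + x ^ q) (i : ℕ) (x : R) : (f ^ i) x = (iteratePoly s q i).eval x := by
  induction i with
  | zero => simp
  | succ i ih => simp [pow_succ', ih, hf]

end iteratePoly

section torsionPoly

variable {K L : Type*} [Field K] [Field L] [Algebra K L] (s : L) {q : ℕ}

noncomputable def torsionPoly (q : ℕ) (b : K[X]) : L[X] :=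
  ∑ i ∈ Finset.range (b.natDegree + 1), C (algebraMap K L (b.coeff i)) * iteratePoly s q i

theorem algHom_apply_eq_eval_torsionPoly (D : K[X] →ₐ[K] Module.End K L)
    (hD : ∀ x, D X x = s * x + x ^ q) (b : K[X]) (x : L) :
    D b x = (torsionPoly s q b).eval x := by
  rw [show D b = aeval (D X) b by rw [aeval_algHom_apply, aeval_X_left_apply],
    aeval_eq_sum_range, torsionPoly, LinearMap.coe_sum, Finset.sum_apply, eval_finsetSum]
  refine Finset.sum_congr rfl fun i _ => ?_
  rw [LinearMap.smul_apply, pow_apply_eq_eval_iteratePoly s _ hD, eval_mul, eval_C,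
    Algebra.smul_def]

theorem natDegree_torsionPoly (hq : 2 ≤ q) {b : K[X]} (hb : b ≠ 0) :
    (torsionPoly s q b).natDegree = q ^ b.natDegree := by
  have hlead : algebraMap K L (b.coeff b.natDegree) ≠ 0 := by simpa using hb
  have hlower : (∑ i ∈ Finset.range b.natDegree,
      C (algebraMap K L (b.coeff i)) * iteratePoly s q i).natDegree < q ^ b.natDegree := by
    refine lt_of_le_of_lt (natDegree_sum_le_of_forall_le _ _ (n := q ^ b.natDegree - 1)
      fun i hi => ?_) (Nat.sub_one_lt (by positivity))
    exact (natDegree_C_mul_le _ _).trans <| (natDegree_iteratePoly s hq i).trans_le <|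
      Nat.le_sub_one_of_lt <| Nat.pow_lt_pow_right hq (Finset.mem_range.mp hi)
  rw [torsionPoly, Finset.sum_range_succ, natDegree_add_eq_right_of_natDegree_lt] <;>
    rw [natDegree_C_mul hlead, natDegree_iteratePoly s hq]
  exact hlower

theorem derivative_torsionPoly (hq : (q : L) = 0) (b : K[X]) :
    derivative (torsionPoly s q b) = C (aeval s b) := by
  simp only [torsionPoly, derivative_sum, derivative_C_mul, derivative_iteratePoly s hq, ← C_mul,
    ← map_sum, aeval_eq_sum_range, Algebra.smul_def]

theorem separable_torsionPoly (hq : (q : L) = 0) {b : K[X]} (hb : aeval s b ≠ 0) :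
    (torsionPoly s q b).Separable := by
  rw [separable_def, derivative_torsionPoly s hq]
  exact ⟨0, C (aeval s b)⁻¹, by rw [zero_mul, zero_add, ← C_mul, inv_mul_cancel₀ hb, C_1]⟩

end torsionPoly

theorem card_torsion_eq {K L : Type*} [Field K] [Field L] [Algebra K L] [IsSepClosed L] {s : L}
    {q : ℕ} (hq : 2 ≤ q) (hqL : (q : L) = 0) (D : K[X] →ₐ[K] Module.End K L)
    (hD : ∀ x, D X x = s * x + x ^ q) {b : K[X]} (hb : b ≠ 0) (hbs : aeval s b ≠ 0) :
    Nat.card {x : L // D b x = 0} = q ^ b.natDegree := by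
  have hsep := separable_torsionPoly s hqL hbs
  have htorsion : {x : L | D b x = 0} = (torsionPoly s q b).rootSet L := by
    ext x
    rw [Set.mem_ofPred_eq, mem_rootSet_of_ne hsep.ne_zero, algHom_apply_eq_eval_torsionPoly s D hD,
      coe_aeval_eq_eval]
  rw [← Set.coe_ofPred, htorsion, Nat.card_eq_fintype_card,
    card_rootSet_eq_natDegree hsep (IsSepClosed.splits_codomain _ hsep),
    natDegree_torsionPoly s hq hb]

theorem drinfeld_torsion_card_general
    (Fq : Type) [Field Fq] [Fintype Fq]
    (L : Type) [Field L] [Algebra Fq L] [IsSepClosed L]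
    (s : L) (hs : Transcendental Fq s)
    (Ds : Polynomial Fq →ₐ[Fq] Module.End Fq L)
    (hDs : ∀ x : L, Ds Polynomial.X x = s * x + x ^ Fintype.card Fq) :
    ∀ b : Polynomial Fq, b ≠ 0 →
      (∃ W : Submodule Fq L, (W : Set L) = {lam : L | Ds b lam = 0}) ∧
      Nat.card {lam : L // Ds b lam = 0} = Fintype.card Fq ^ b.natDegree := by
  intro b hb
  have hqL : (Fintype.card Fq : L) = 0 := by
    rw [← map_natCast (algebraMap Fq L), FiniteField.cast_card_eq_zero, map_zero]
  exact ⟨⟨LinearMap.ker (Ds b), rfl⟩,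
    card_torsion_eq Fintype.one_lt_card hqL Ds hDs hb fun h => hs ⟨b, hb, h⟩⟩

/-- Let `L` be a separably closed field containing `F_q` and an element
`s` transcendental over `F_q`. For every nonzero `b ∈ F_q[X]`, the set
`{λ ∈ L : D_s(b)(λ) = 0}` is an `F_q`-subspace of `L` with exactly `q^{deg b}` elements. -/
theorem drinfeld_torsion_card
    (p m : ℕ) (hp : p.Prime) (hm : 0 < m)
    (Fq : Type) [Field Fq] [Fintype Fq] (hq : Fintype.card Fq = p ^ m)
    (L : Type) [Field L] [Algebra Fq L] [IsSepClosed L]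
    (s : L) (hs : Transcendental Fq s)
    (Ds : Polynomial Fq →ₐ[Fq] Module.End Fq L)
    (hDs : ∀ x : L, Ds Polynomial.X x = s * x + x ^ Fintype.card Fq) :
    ∀ b : Polynomial Fq, b ≠ 0 →
      (∃ W : Submodule Fq L, (W : Set L) = {lam : L | Ds b lam = 0}) ∧
      Nat.card {lam : L // Ds b lam = 0} = Fintype.card Fq ^ b.natDegree :=
  drinfeld_torsion_card_general Fq L s hs Ds hDs
end

section
/- Let K be a field containing F_q and an element s transcendental over F_q, and let L be a separable closure of K. Let b ∈ F_q[X] be nonzero and, for j ≥ 0, set V_j := {λ ∈ L : D_s(b)^j(λ) = 0}. Then for every k ≥ 1 the map D_s(b^{k−1}) sends V_k onto V_1, its restriction to V_k has kernel exactly V_{k−1}, and it commutes with every field automorphism of L fixing K pointwise; consequently it induces an F_q-linear, Galois-equivariant isomorphism V_k / V_{k−1} ≅ V_1. -/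
open Polynomial


/-- Let `K` be a field containing `F_q` and an element `s` transcendental
over `F_q`, `L` a separable closure of `K`, `b ∈ F_q[X]` nonzero and
`V_j := {λ ∈ L : D_s(b)^j(λ) = 0}`. For every `k ≥ 1` the map `D_s(b^{k−1})` sends `V_k`
onto `V_1`, its restriction to `V_k` has kernel exactly `V_{k−1}`, and it commutes with
every field automorphism of `L` fixing `K`; hence it induces a Galois-equivariant
isomorphism `V_k / V_{k−1} ≅ V_1`. -/
theorem drinfeld_torsion_filtration_quotients
    (p m : ℕ) (hp : p.Prime) (hm : 0 < m)
    (Fq : Type) [Field Fq] [Fintype Fq] (hq : Fintype.card Fq = p ^ m)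
    (K : Type) [Field K] [Algebra Fq K] (s : K) (hs : Transcendental Fq s)
    (L : Type) [Field L] [Algebra Fq L] [Algebra K L] [IsScalarTower Fq K L]
    [IsSepClosure K L]
    (Ds : Polynomial Fq →ₐ[Fq] Module.End Fq L)
    (hDs : ∀ x : L, Ds Polynomial.X x = algebraMap K L s * x + x ^ Fintype.card Fq)
    (b : Polynomial Fq) (hb : b ≠ 0) :
    ∀ k : ℕ, 1 ≤ k →
      (∀ lam : L, (Ds b ^ k) lam = 0 → (Ds b) (Ds (b ^ (k - 1)) lam) = 0) ∧
      (∀ mu : L, Ds b mu = 0 → ∃ lam : L, (Ds b ^ k) lam = 0 ∧ Ds (b ^ (k - 1)) lam = mu) ∧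
      (∀ lam : L, (Ds b ^ k) lam = 0 →
        (Ds (b ^ (k - 1)) lam = 0 ↔ (Ds b ^ (k - 1)) lam = 0)) ∧
      (∀ σ : L ≃ₐ[K] L, ∀ lam : L, Ds (b ^ (k - 1)) (σ lam) = σ (Ds (b ^ (k - 1)) lam)) := by
  classical
  -- characteristic
  have hcharFq : CharP Fq p := by
    obtain ⟨n, hr, hcard⟩ := FiniteField.card Fq (ringChar Fq)
    have : p = ringChar Fq := by
      have hdvd : p ∣ (ringChar Fq) ^ (n : ℕ) := by
        rw [← hcard, hq]
        exact dvd_pow_self p hm.ne'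
      exact ((Nat.prime_dvd_prime_iff_eq hp hr).mp (hp.dvd_of_dvd_pow hdvd))
    rw [this]; infer_instance
  haveI hcharL : CharP L p :=
    charP_of_injective_algebraMap (algebraMap Fq L).injective p
  have hqL : ((Fintype.card Fq : ℕ) : L) = 0 := by
    rw [hq]
    push_cast
    rw [CharP.cast_eq_zero L p]
    exact zero_pow hm.ne'
  set q := Fintype.card Fq with hqdef
  set s' : L := algebraMap K L s with hs'def
  -- the polynomial representing Ds X ^ n
  have hPn : ∀ n : ℕ, ∃ P : Polynomial L,
      (∀ x : L, P.eval x = ((Ds X) ^ n) x) ∧ P.derivative = C (s' ^ n) := by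
    intro n
    induction n with
    | zero => exact ⟨X, by simp, by simp⟩
    | succ n ih =>
      obtain ⟨P, hPe, hPd⟩ := ih
      refine ⟨C s' * P + P ^ q, ?_, ?_⟩
      · intro x
        have : ((Ds X) ^ (n+1)) x = Ds X (((Ds X) ^ n) x) := by
          rw [pow_succ']; rfl
        rw [this, hDs]
        simp [hPe x]
      · rw [derivative_add, derivative_C_mul, derivative_pow, hPd, hqL]
        simp [pow_succ, mul_comm]
  -- the polynomial representing Ds c
  have hPc : ∀ c : Polynomial Fq, ∃ P : Polynomial L,
      (∀ x : L, P.eval x = Ds c x) ∧ P.derivative = C (aeval s' c) := by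
    intro c
    induction c using Polynomial.induction_on' with
    | add f g hf hg =>
      obtain ⟨P, hPe, hPd⟩ := hf
      obtain ⟨Q, hQe, hQd⟩ := hg
      refine ⟨P + Q, fun x => ?_, ?_⟩
      · simp [hPe x, hQe x, map_add]
      · rw [derivative_add, hPd, hQd, map_add, C_add]
    | monomial n a =>
      obtain ⟨P, hPe, hPd⟩ := hPn n
      refine ⟨C (algebraMap Fq L a) * P, fun x => ?_, ?_⟩
      · have h1 : Ds (monomial n a) = Ds (C a) * (Ds X) ^ n := by
          rw [← map_pow, ← map_mul, ← C_mul_X_pow_eq_monomial]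
        have h2 : Ds (C a) = algebraMap Fq (Module.End Fq L) a := Ds.commutes a
        rw [h1]
        show eval x (C (algebraMap Fq L a) * P) = Ds (C a) (((Ds X) ^ n) x)
        rw [h2]
        simp [hPe x, Module.algebraMap_end_apply, Algebra.smul_def]
      · rw [derivative_C_mul, hPd, aeval_monomial, ← C_mul]
  -- Ds b is surjective
  have hBne : aeval s' b ≠ 0 := by
    rw [hs'def, Polynomial.aeval_algebraMap_apply]
    intro h
    have : aeval s b = 0 := by
      have := (algebraMap K L).injective (by simpa using h)
      simpa using this
    exact hb (transcendental_iff.mp hs b this)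
  have hsurj : ∀ mu : L, ∃ x : L, Ds b x = mu := by
    intro mu
    obtain ⟨P, hPe, hPd⟩ := hPc b
    set f : Polynomial L := P - C mu with hfdef
    have hfd : f.derivative = C (aeval s' b) := by
      rw [hfdef, derivative_sub, derivative_C, sub_zero, hPd]
    have hdeg : f.degree ≠ 0 := by
      intro h0
      have : f = C (f.coeff 0) := eq_C_of_degree_le_zero (le_of_eq h0)
      have : f.derivative = 0 := by rw [this, derivative_C]
      rw [hfd] at this
      exact hBne (by simpa using this)
    have hsep : f.Separable := by
      refine ⟨0, C (aeval s' b)⁻¹, ?_⟩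
      rw [hfd, zero_mul, zero_add, ← C_mul, inv_mul_cancel₀ hBne, C_1]
    haveI : IsSepClosed L := IsSepClosure.sep_closed K
    obtain ⟨x, hx⟩ := IsSepClosed.exists_root f hdeg hsep
    refine ⟨x, ?_⟩
    have : P.eval x - mu = 0 := by simpa [hfdef, IsRoot] using hx
    rw [← hPe x]
    exact sub_eq_zero.mp this
  -- surjectivity of powers
  have hsurjpow : ∀ n : ℕ, ∀ mu : L, ∃ x : L, ((Ds b) ^ n) x = mu := by
    intro n
    induction n with
    | zero => intro mu; exact ⟨mu, rfl⟩
    | succ n ih =>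
      intro mu
      obtain ⟨y, hy⟩ := hsurj mu
      obtain ⟨x, hx⟩ := ih y
      refine ⟨x, ?_⟩
      rw [pow_succ']
      show Ds b (((Ds b) ^ n) x) = mu
      rw [hx, hy]
  -- Galois equivariance
  have hcomm : ∀ (c : Polynomial Fq) (σ : L ≃ₐ[K] L) (x : L), Ds c (σ x) = σ (Ds c x) := by
    intro c σ
    have hX : ∀ n : ℕ, ∀ x : L, ((Ds X) ^ n) (σ x) = σ (((Ds X) ^ n) x) := by
      intro n
      induction n with
      | zero => intro x; rfl
      | succ n ih =>
        intro x
        have e : ∀ y : L, ((Ds X) ^ (n+1)) y = Ds X (((Ds X) ^ n) y) := by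
          intro y; rw [pow_succ']; rfl
        rw [e, e, ih, hDs, hDs, map_add, map_mul, map_pow, AlgEquiv.commutes]
    induction c using Polynomial.induction_on' with
    | add f g hf hg =>
      intro x
      simp only [map_add, LinearMap.add_apply, map_add]
      rw [hf x, hg x]
    | monomial n a =>
      intro x
      have h1 : Ds (monomial n a) = Ds (C a) * (Ds X) ^ n := by
        rw [← map_pow, ← map_mul, ← C_mul_X_pow_eq_monomial]
      have h2 : Ds (C a) = algebraMap Fq (Module.End Fq L) a := Ds.commutes a
      rw [h1]
      show Ds (C a) (((Ds X) ^ n) (σ x)) = σ (Ds (C a) (((Ds X) ^ n) x))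
      rw [h2, Module.algebraMap_end_apply, Module.algebraMap_end_apply, hX n x]
      rw [← IsScalarTower.algebraMap_smul K a (((Ds X) ^ n) x),
        ← IsScalarTower.algebraMap_smul K a (σ (((Ds X) ^ n) x)), map_smul]
  -- assemble
  intro k hk
  have hk' : k - 1 + 1 = k := Nat.succ_pred_eq_of_pos hk
  have hpowe : Ds (b ^ (k-1)) = (Ds b) ^ (k-1) := map_pow Ds b (k-1)
  refine ⟨?_, ?_, ?_, ?_⟩
  · intro lam hlam
    rw [hpowe]
    have : ((Ds b) ^ k) lam = Ds b (((Ds b) ^ (k-1)) lam) := by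
      conv_lhs => rw [← hk']
      rw [pow_succ']; rfl
    rw [← this]; exact hlam
  · intro mu hmu
    obtain ⟨lam, hlam⟩ := hsurjpow (k-1) mu
    refine ⟨lam, ?_, ?_⟩
    · have : ((Ds b) ^ k) lam = Ds b (((Ds b) ^ (k-1)) lam) := by
        conv_lhs => rw [← hk']
        rw [pow_succ']; rfl
      rw [this, hlam, hmu]
    · rw [hpowe, hlam]
  · intro lam _
    rw [hpowe]
  · intro σ lam
    rw [hpowe, ← map_pow]
    exact hcomm (b ^ (k-1)) σ lam
end

section
/- Let L be a separably closed field containing the rational function field F_q(t) with t transcendental over F_q, write C := D_t, and let π ∈ F_q[X] be monic irreducible of degree d. Then the π-torsion set C[π] := {δ ∈ L : C(π)(δ) = 0} has exactly q^d elements; the rule (a mod π)·δ := C(a)(δ) is well defined and makes C[π] a one-dimensional vector space over the field F_q[X]/(π); and for every field automorphism σ of L fixing F_q(t) pointwise there is a unique invertible residue class ā ∈ (F_q[X]/(π))^× such that σ(δ) = C(a)(δ) for all δ ∈ C[π] and every representative a ∈ F_q[X] of ā. -/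
/-!
`C(π)` acts on `L` as evaluation of an additive polynomial of degree `q ^ deg π` whose
derivative is the constant `π(t)`, nonzero because `t` is transcendental; so in the separably
closed field `L` it has exactly `q ^ deg π` roots. Since `π` is irreducible, a nonzero torsion
point `δ₀` has annihilator `(π)`, so `a ↦ C(a) δ₀` is injective on polynomials of degree
`< deg π`; counting shows it is onto `C[π]`. An automorphism fixing `t` commutes with every
`C(a)`, so it sends `δ₀` to some `C(a) δ₀`, and then acts on all of `C[π]` as `C(a)`.
-/

open Polynomial

section Torsion

variable {R A M : Type*} [CommSemiring R] [CommRing A] [Algebra R A] [AddCommGroup M]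
  [Module R M] (C : A →ₐ[R] Module.End R M) {π a b : A} {δ : M}

theorem apply_apply_eq_zero (hδ : C π δ = 0) (a : A) : C π (C a δ) = 0 := by
  rw [← Module.End.mul_apply, ← map_mul, mul_comm, map_mul, Module.End.mul_apply, hδ, map_zero]

theorem apply_eq_apply_of_dvd_sub (hδ : C π δ = 0) (h : π ∣ a - b) : C a δ = C b δ := by
  obtain ⟨c, hc⟩ := h
  rw [← sub_eq_zero, ← LinearMap.sub_apply, ← map_sub, hc, mul_comm, map_mul,
    Module.End.mul_apply, hδ, map_zero]

theorem eq_zero_of_isCoprime (hco : IsCoprime a π) (ha : C a δ = 0) (hπ : C π δ = 0) :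
    δ = 0 := by
  obtain ⟨u, v, huv⟩ := hco
  calc δ = C (u * a + v * π) δ := by rw [huv, map_one, Module.End.one_apply]
    _ = 0 := by simp only [map_add, map_mul, LinearMap.add_apply, Module.End.mul_apply, ha, hπ,
      map_zero, add_zero]

theorem apply_eq_apply_iff_dvd_sub [IsBezout A] (hπ : Irreducible π) (hδ : C π δ = 0)
    (hδ0 : δ ≠ 0) : C a δ = C b δ ↔ π ∣ a - b := by
  refine ⟨fun h => ?_, apply_eq_apply_of_dvd_sub C hδ⟩
  by_contra hdvd
  refine hδ0 (eq_zero_of_isCoprime C ((hπ.coprime_iff_not_dvd.2 hdvd).symm) ?_ hδ)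
  rw [map_sub, LinearMap.sub_apply, h, sub_self]

theorem apply_eq_apply_of_mk_eq (hδ : C π δ = 0)
    (h : Ideal.Quotient.mk (Ideal.span {π}) a = Ideal.Quotient.mk (Ideal.span {π}) b) :
    C a δ = C b δ :=
  apply_eq_apply_of_dvd_sub C hδ (Ideal.mem_span_singleton.1 (Ideal.Quotient.eq.1 h))

theorem isUnit_mk_of_isCoprime (h : IsCoprime π a) :
    IsUnit (Ideal.Quotient.mk (Ideal.span {π}) a) := by
  obtain ⟨u, v, huv⟩ := h
  refine IsUnit.of_mul_eq_one (Ideal.Quotient.mk _ v) ?_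
  rw [← map_mul, ← map_one (Ideal.Quotient.mk _), Ideal.Quotient.eq, Ideal.mem_span_singleton]
  exact ⟨-u, by linear_combination huv⟩

theorem existsUnique_unit_apply_eq_of_commute [IsBezout A] (hπ : Irreducible π) {δ₀ : M}
    (hδ₀ : C π δ₀ = 0) (hgen : ∀ δ, C π δ = 0 → ∃ a, C a δ₀ = δ) {e : Module.End R M}
    (he : ∀ a, Commute e (C a)) (he0 : e δ₀ ≠ 0) :
    ∃! u : (A ⧸ Ideal.span {π})ˣ, ∀ a, Ideal.Quotient.mk (Ideal.span {π}) a = u →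
      ∀ δ, C π δ = 0 → e δ = C a δ := by
  have hδ₀0 : δ₀ ≠ 0 := fun h => he0 (h ▸ map_zero e)
  have hcomm : ∀ a x, e (C a x) = C a (e x) := fun a => LinearMap.congr_fun (he a).eq
  obtain ⟨a, ha⟩ := hgen (e δ₀) (by rw [← hcomm, hδ₀, map_zero])
  have hact : ∀ δ, C π δ = 0 → e δ = C a δ := by
    intro δ hδ
    obtain ⟨b, rfl⟩ := hgen δ hδ
    rw [hcomm, ← ha, ← Module.End.mul_apply, ← map_mul, mul_comm, map_mul, Module.End.mul_apply]
  have hunit : IsUnit (Ideal.Quotient.mk (Ideal.span {π}) a) := by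
    refine isUnit_mk_of_isCoprime (hπ.coprime_iff_not_dvd.2 fun hdvd => he0 ?_)
    rw [← ha, apply_eq_apply_of_dvd_sub C hδ₀ (sub_zero a ▸ hdvd), map_zero, LinearMap.zero_apply]
  refine ⟨hunit.unit, fun b hb δ hδ => ?_, fun u hu => Units.ext ?_⟩
  · rw [hact δ hδ]
    exact apply_eq_apply_of_mk_eq C hδ hb.symm
  · obtain ⟨b, hb⟩ := Ideal.Quotient.mk_surjective (u : A ⧸ Ideal.span {π})
    rw [← hb, IsUnit.unit_spec, Ideal.Quotient.eq, Ideal.mem_span_singleton,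
      ← apply_eq_apply_iff_dvd_sub C hπ hδ₀ hδ₀0, ha]
    exact (hu b hb δ₀ hδ₀).symm

end Torsion

theorem exists_apply_eq_of_natCard_le {K M : Type*} [Field K] [Fintype K] [AddCommGroup M]
    [Module K M] (C : K[X] →ₐ[K] Module.End K M) {π : K[X]} (hπ : Irreducible π)
    [Finite {δ // C π δ = 0}]
    (hcard : Nat.card {δ // C π δ = 0} ≤ Fintype.card K ^ π.natDegree)
    {δ₀ : M} (hδ₀ : C π δ₀ = 0) (hδ₀0 : δ₀ ≠ 0) {δ : M} (hδ : C π δ = 0) :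
    ∃ a, C a δ₀ = δ := by
  let orbit : degreeLT K π.natDegree → {δ // C π δ = 0} :=
    fun a => ⟨C a δ₀, apply_apply_eq_zero C hδ₀ a⟩
  have horbit : Function.Injective orbit := by
    intro a b hab
    have hdvd : π ∣ (a : K[X]) - b :=
      (apply_eq_apply_iff_dvd_sub C hπ hδ₀ hδ₀0).1 (congrArg Subtype.val hab)
    refine Subtype.ext (sub_eq_zero.1 (by_contra fun hne => hne ?_))
    exact eq_zero_of_dvd_of_natDegree_lt hdvd
      ((natDegree_lt_iff_degree_lt hne).2 (mem_degreeLT.1 (sub_mem a.2 b.2)))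
  have hsource : Nat.card (degreeLT K π.natDegree) = Fintype.card K ^ π.natDegree := by
    rw [Nat.card_congr (degreeLTEquiv K π.natDegree).toEquiv, Nat.card_fun, Nat.card_fin,
      Nat.card_eq_fintype_card]
  obtain ⟨a, ha⟩ := (horbit.bijective_of_nat_card_le (hsource ▸ hcard)).2 ⟨δ, hδ⟩
  exact ⟨a, congrArg Subtype.val ha⟩

theorem commute_apply_of_commute_X {R M : Type*} [CommSemiring R] [AddCommMonoid M] [Module R M]
    (C : R[X] →ₐ[R] Module.End R M) {e : Module.End R M} (h : Commute e (C X)) (f : R[X]) :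
    Commute e (C f) := by
  refine Algebra.commute_of_mem_adjoin_singleton_of_commute (R := R) ?_ h
  rw [show C f = aeval (C X) f by rw [aeval_algHom_apply, aeval_X_left_apply]]
  exact aeval_mem_adjoin_singleton R (C X)

section CarlitzPolynomial

variable {L : Type*} [Field L] (q : ℕ) (t : L)

noncomputable def carlitzIter : ℕ → L[X]
  | 0 => X
  | i + 1 => carlitzIter i ^ q + C t * carlitzIter i

theorem eval_carlitzIter {φ : L → L} (hφ : ∀ x, φ x = t * x + x ^ q) (i : ℕ) (x : L) :
    (carlitzIter q t i).eval x = φ^[i] x := by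
  induction i with
  | zero => simp [carlitzIter]
  | succ i ih => simp [carlitzIter, Function.iterate_succ_apply', hφ, ih, add_comm]

variable {q}

theorem natDegree_carlitzIter (hq : 1 < q) (i : ℕ) : (carlitzIter q t i).natDegree = q ^ i := by
  induction i with
  | zero => simp [carlitzIter]
  | succ i ih =>
    have hlt : (C t * carlitzIter q t i).natDegree < (carlitzIter q t i ^ q).natDegree := by
      rw [natDegree_pow]
      refine (natDegree_C_mul_le t _).trans_lt (lt_mul_left ?_ hq)
      rw [ih]
      exact pow_pos (zero_lt_one.trans hq) i
    rw [carlitzIter, natDegree_add_eq_left_of_natDegree_lt hlt, natDegree_pow, ih, pow_succ',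
      mul_comm]

theorem monic_carlitzIter (hq : 1 < q) (i : ℕ) : (carlitzIter q t i).Monic := by
  induction i with
  | zero => exact monic_X
  | succ i ih =>
    refine (ih.pow q).add_of_left (degree_lt_degree ?_)
    rw [natDegree_pow]
    refine (natDegree_C_mul_le t _).trans_lt (lt_mul_left ?_ hq)
    rw [natDegree_carlitzIter t hq]
    exact pow_pos (zero_lt_one.trans hq) i

theorem derivative_carlitzIter (hq : (q : L) = 0) (i : ℕ) :
    derivative (carlitzIter q t i) = C (t ^ i) := by
  induction i with
  | zero => simp [carlitzIter]
  | succ i ih => simp [carlitzIter, derivative_pow, ih, hq, pow_succ, mul_comm]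

variable {K : Type*} [Field K] [Algebra K L]

variable (q) in
noncomputable def carlitzPoly (f : K[X]) : L[X] :=
  ∑ i ∈ Finset.range (f.natDegree + 1), C (algebraMap K L (f.coeff i)) * carlitzIter q t i

theorem eval_carlitzPoly {D : K[X] →ₐ[K] Module.End K L} (hD : ∀ x, D X x = t * x + x ^ q)
    (f : K[X]) (x : L) : (carlitzPoly q t f).eval x = D f x := by
  rw [show D f = aeval (D X) f by rw [aeval_algHom_apply, aeval_X_left_apply],
    aeval_eq_sum_range, LinearMap.sum_apply, carlitzPoly, eval_finsetSum]
  refine Finset.sum_congr rfl fun i _ => ?_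
  rw [eval_mul, eval_C, eval_carlitzIter q t hD, LinearMap.smul_apply, Module.End.pow_apply,
    Algebra.smul_def]

theorem natDegree_carlitzPoly (hq : 1 < q) {f : K[X]} (hf : f ≠ 0) :
    (carlitzPoly q t f).natDegree = q ^ f.natDegree := by
  have hlead : (C (algebraMap K L f.leadingCoeff) * carlitzIter q t f.natDegree).degree
      = (q ^ f.natDegree : ℕ) := by
    have hc : algebraMap K L f.leadingCoeff ≠ 0 :=
      (map_ne_zero_iff _ (algebraMap K L).injective).2 (leadingCoeff_ne_zero.2 hf)
    rw [degree_C_mul hc, degree_eq_natDegree (monic_carlitzIter t hq _).ne_zero,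
      natDegree_carlitzIter t hq]
  have hlower : (∑ i ∈ Finset.range f.natDegree,
      C (algebraMap K L (f.coeff i)) * carlitzIter q t i).degree < (q ^ f.natDegree : ℕ) := by
    refine (degree_sum_le _ _).trans_lt
      ((Finset.sup_lt_iff (WithBot.bot_lt_coe _)).2 fun i hi => ?_)
    refine degree_le_natDegree.trans_lt (Nat.cast_lt.2 ((natDegree_C_mul_le _ _).trans_lt ?_))
    rw [natDegree_carlitzIter t hq]
    exact Nat.pow_lt_pow_right hq (Finset.mem_range.1 hi)
  rw [carlitzPoly, Finset.sum_range_succ, natDegree_add_eq_right_of_degree_lt (hlead ▸ hlower),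
    ← leadingCoeff, natDegree_eq_of_degree_eq_some hlead]

theorem derivative_carlitzPoly (hq : (q : L) = 0) (f : K[X]) :
    derivative (carlitzPoly q t f) = C (aeval t f) := by
  simp only [carlitzPoly, derivative_sum, derivative_C_mul, derivative_carlitzIter t hq, ← C_mul,
    ← map_sum, aeval_eq_sum_range, Algebra.smul_def]

theorem separable_carlitzPoly (hq : (q : L) = 0) {f : K[X]} (hf : aeval t f ≠ 0) :
    (carlitzPoly q t f).Separable := by
  rw [Separable, derivative_carlitzPoly t hq]
  exact isCoprime_one_right.of_isCoprime_of_dvd_right (isUnit_C.2 hf.isUnit).dvd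

end CarlitzPolynomial

theorem Polynomial.natCard_eval_eq_zero_of_separable {L : Type*} [Field L] [IsSepClosed L]
    {p : L[X]} (hp : p.Separable) : Nat.card {x // p.eval x = 0} = p.natDegree := by
  have hroots : {x | p.eval x = 0} = p.rootSet L := by
    ext x
    simp [mem_rootSet, hp.ne_zero]
  rw [← Set.coe_ofPred, hroots, Nat.card_eq_fintype_card]
  exact card_rootSet_eq_natDegree hp (by simpa using IsSepClosed.splits_of_separable p hp)

theorem natCard_apply_eq_zero_of_aeval_ne_zero {K L : Type*} [Field K] [Fintype K] [Field L]
    [Algebra K L] [IsSepClosed L] {t : L} {D : K[X] →ₐ[K] Module.End K L}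
    (hD : ∀ x, D X x = t * x + x ^ Fintype.card K) {f : K[X]} (hf : aeval t f ≠ 0) :
    Nat.card {δ // D f δ = 0} = Fintype.card K ^ f.natDegree := by
  have hq : (Fintype.card K : L) = 0 := by
    rw [← map_natCast (algebraMap K L), FiniteField.cast_card_eq_zero, map_zero]
  simp_rw [← eval_carlitzPoly t hD f]
  rw [natCard_eval_eq_zero_of_separable (separable_carlitzPoly t hq hf),
    natDegree_carlitzPoly t Fintype.one_lt_card fun h => hf (by rw [h, map_zero])]

theorem carlitz_torsion_one_dimensional_and_character_general
    (Fq : Type) [Field Fq] [Fintype Fq]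
    (L : Type) [Field L] [Algebra Fq L] [IsSepClosed L]
    (t : L) (ht : Transcendental Fq t)
    (C : Polynomial Fq →ₐ[Fq] Module.End Fq L)
    (hC : ∀ x : L, C Polynomial.X x = t * x + x ^ Fintype.card Fq)
    (π : Polynomial Fq) (hπirr : Irreducible π) :
    -- (a) cardinality q^d
    Nat.card {δ : L // C π δ = 0} = Fintype.card Fq ^ π.natDegree ∧
    -- (b) the F_q[X]/(π)-action is well defined ...
    (∀ a b : Polynomial Fq,
      Ideal.Quotient.mk (Ideal.span {π}) a = Ideal.Quotient.mk (Ideal.span {π}) b →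
      ∀ δ : L, C π δ = 0 → C a δ = C b δ) ∧
    (∀ (a : Polynomial Fq) (δ : L), C π δ = 0 → C π (C a δ) = 0) ∧
    -- ... and C[π] is one-dimensional over F_q[X]/(π): a single nonzero torsion point
    -- generates everything
    (∃ δ₀ : L, C π δ₀ = 0 ∧ δ₀ ≠ 0 ∧
      ∀ δ : L, C π δ = 0 → ∃ a : Polynomial Fq, C a δ₀ = δ) ∧
    -- (c) the mod π Carlitz character: unique unit class through which σ acts
    (∀ σ : L ≃ₐ[Fq] L, σ t = t →
      ∃! abar : (Polynomial Fq ⧸ Ideal.span {π})ˣ,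
        ∀ a : Polynomial Fq,
          Ideal.Quotient.mk (Ideal.span {π}) a = (abar : Polynomial Fq ⧸ Ideal.span {π}) →
          ∀ δ : L, C π δ = 0 → σ δ = C a δ) := by
  have hcard := natCard_apply_eq_zero_of_aeval_ne_zero hC
    fun h => hπirr.ne_zero (transcendental_iff.1 ht π h)
  have : Finite {δ // C π δ = 0} :=
    Nat.finite_of_card_ne_zero (hcard ▸ pow_ne_zero _ Fintype.card_ne_zero)
  have : Nontrivial {δ // C π δ = 0} := Finite.one_lt_card_iff_nontrivial.1 <|
    hcard ▸ Nat.one_lt_pow hπirr.natDegree_pos.ne' Fintype.one_lt_card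
  obtain ⟨⟨δ₀, hδ₀⟩, hδ₀0⟩ := exists_ne (⟨0, map_zero _⟩ : {δ // C π δ = 0})
  replace hδ₀0 : δ₀ ≠ 0 := fun h => hδ₀0 (Subtype.ext h)
  have hgen : ∀ δ, C π δ = 0 → ∃ a, C a δ₀ = δ :=
    fun δ => exists_apply_eq_of_natCard_le C hπirr hcard.le hδ₀ hδ₀0
  refine ⟨hcard, fun a b h δ hδ => apply_eq_apply_of_mk_eq C hδ h,
    fun a δ hδ => apply_apply_eq_zero C hδ a, ⟨δ₀, hδ₀, hδ₀0, hgen⟩, fun σ hσ => ?_⟩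
  have hσC : Commute σ.toLinearMap (C X) := LinearMap.ext fun x => by
    simp [hC, hσ]
  exact existsUnique_unit_apply_eq_of_commute C hπirr hδ₀ hgen
    (commute_apply_of_commute_X C hσC) (by simpa using hδ₀0)

/-- Let `L` be a separably closed field containing `F_q(t)` (with `t`
transcendental over `F_q`), `C := D_t`, and `π ∈ F_q[X]` monic irreducible of degree `d`.
Then the `π`-torsion `C[π] = {δ ∈ L : C(π)(δ) = 0}` has exactly `q^d` elements; the rule
`(a mod π)·δ := C(a)(δ)` is well defined and makes `C[π]` a one-dimensional vector space
over `F_q[X]/(π)`; and every automorphism `σ` of `L` fixing `F_q(t)` acts on `C[π]`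
through a unique unit `ā ∈ (F_q[X]/(π))^×`. -/
theorem carlitz_torsion_one_dimensional_and_character
    (p m : ℕ) (hp : p.Prime) (hm : 0 < m)
    (Fq : Type) [Field Fq] [Fintype Fq] (hq : Fintype.card Fq = p ^ m)
    (L : Type) [Field L] [Algebra Fq L] [IsSepClosed L]
    (t : L) (ht : Transcendental Fq t)
    (C : Polynomial Fq →ₐ[Fq] Module.End Fq L)
    (hC : ∀ x : L, C Polynomial.X x = t * x + x ^ Fintype.card Fq)
    (π : Polynomial Fq) (hπmonic : π.Monic) (hπirr : Irreducible π) :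
    -- (a) cardinality q^d
    Nat.card {δ : L // C π δ = 0} = Fintype.card Fq ^ π.natDegree ∧
    -- (b) the F_q[X]/(π)-action is well defined ...
    (∀ a b : Polynomial Fq,
      Ideal.Quotient.mk (Ideal.span {π}) a = Ideal.Quotient.mk (Ideal.span {π}) b →
      ∀ δ : L, C π δ = 0 → C a δ = C b δ) ∧
    (∀ (a : Polynomial Fq) (δ : L), C π δ = 0 → C π (C a δ) = 0) ∧
    -- ... and C[π] is one-dimensional over F_q[X]/(π): a single nonzero torsion point
    -- generates everything
    (∃ δ₀ : L, C π δ₀ = 0 ∧ δ₀ ≠ 0 ∧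
      ∀ δ : L, C π δ = 0 → ∃ a : Polynomial Fq, C a δ₀ = δ) ∧
    -- (c) the mod π Carlitz character: unique unit class through which σ acts
    (∀ σ : L ≃ₐ[Fq] L, σ t = t →
      ∃! abar : (Polynomial Fq ⧸ Ideal.span {π})ˣ,
        ∀ a : Polynomial Fq,
          Ideal.Quotient.mk (Ideal.span {π}) a = (abar : Polynomial Fq ⧸ Ideal.span {π}) →
          ∀ δ : L, C π δ = 0 → σ δ = C a δ) :=
  carlitz_torsion_one_dimensional_and_character_general Fq L t ht C hC π hπirr
end

section
/- Let r = p^ν with ν ≥ 1, let K be a field containing F_q and an element s transcendental over F_q, set t := s^r, and let L be a separable closure of K. Write ψ := D_s, C := D_t, and let Φ : F_q[X] → End_{F_q}(L) be the F_q-algebra homomorphism Φ(a) := ψ(â)^r (the endomorphism realization of the rank-r Drinfeld module with Φ_X = (t^{1/r} + τ)^r). Let π ∈ F_q[X] be monic irreducible of degree d, and let i ≥ 0 be an integer with i·r ≡ 1 (mod q^d − 1). For 0 ≤ k ≤ r put V_k := {λ ∈ L : ψ(π̂)^k(λ) = 0}. Then: (a) 0 = V_0 ⊆ V_1 ⊆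 ⋯ ⊆ V_r = {λ ∈ L : Φ(π)(λ) = 0}; (b) each V_k is an F_q-subspace of L of dimension k·d, stable under every field automorphism of L fixing K pointwise; (c) for every field automorphism σ of L fixing K pointwise, every λ ∈ V_1, and every a ∈ F_q[X] such that σ(δ) = C(a)(δ) holds for all δ ∈ L with C(π)(δ) = 0, one has σ(λ) = ψ(â)^{i·r}(λ). (This expresses that the mod π Galois representation attached to Φ is upper triangular with all diagonal characters equal to the i-th power of the mod π Carlitz character.) -/
/-!
For `q = |F_q|`, the endomorphism `ψ(a)` is evaluation of the `q`-linearized polynomial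
obtained from `a` by substituting `s + τ` for `X` (`τ x = x ^ q`). Its derivative is the constant
`a(s)`, nonzero since `s` is transcendental, so in the separably closed field `L` the kernel of
`ψ(a)` has exactly `q ^ deg a` elements; for `a = π̂ ^ k` this is the dimension count.

Raising to the power `r` turns `ψ(â)` into `C(a)`, so for `λ ∈ ker ψ(π̂)` we get
`λ^r ∈ ker C(π)` and `σ(λ)^r = C(a)(λ^r) = (ψ(â) λ)^r`, i.e. `σ λ = ψ(â) λ`. On `ker ψ(π̂)` the
operator `ψ(â)` depends only on `â` modulo `π̂`, an element of the field `F_q[X]/(π̂)` with `q^d`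
elements, whose `i r`-th power is itself when `i r ≡ 1 (mod q^d - 1)`.
-/

open Polynomial

theorem Polynomial.irreducible_of_irreducible_map_ringEquiv {R S : Type*} [CommRing R]
    [CommRing S] (e : R ≃+* S) {f : R[X]} (h : Irreducible (f.map (e : R →+* S))) :
    Irreducible f :=
  .of_map (f := mapEquiv e) h

section Intertwining

variable {Fq L : Type*} [CommRing Fq] [CommRing L] [Algebra Fq L]

theorem algHom_end_C_apply (φ : Fq[X] →ₐ[Fq] Module.End Fq L) (c : Fq) (x : L) :
    φ (C c) x = algebraMap Fq L c * x := by
  rw [← algebraMap_eq, AlgHom.commutes, Module.algebraMap_end_apply, Algebra.smul_def]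

theorem intertwines_map_of_intertwines_X {φ φ' : Fq[X] →ₐ[Fq] Module.End Fq L}
    (τ : Fq →+* Fq) (F : L →+* L) (hF : ∀ c, F (algebraMap Fq L c) = algebraMap Fq L (τ c))
    (hX : ∀ x, F (φ X x) = φ' X (F x)) (a : Fq[X]) (x : L) :
    F (φ a x) = φ' (a.map τ) (F x) := by
  induction a using Polynomial.induction_on generalizing x with
  | C c => rw [map_C, algHom_end_C_apply, algHom_end_C_apply, map_mul, hF]
  | add f g hf hg => simp only [map_add, Polynomial.map_add, LinearMap.add_apply, hf, hg]
  | monomial n c ih =>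
    rw [pow_succ, ← mul_assoc, map_mul, Module.End.mul_apply, ih, hX,
      Polynomial.map_mul (p := C c * X ^ n), Polynomial.map_X, map_mul, Module.End.mul_apply]

end Intertwining

section Torsion

variable {Fq M : Type*} [Field Fq] [AddCommGroup M] [Module Fq M]

theorem algHom_end_apply_eq_zero_of_dvd (φ : Fq[X] →ₐ[Fq] Module.End Fq M) {f g : Fq[X]}
    (hfg : f ∣ g) {x : M} (hfx : φ f x = 0) : φ g x = 0 := by
  obtain ⟨c, rfl⟩ := hfg
  rw [mul_comm, map_mul, Module.End.mul_apply, hfx, map_zero]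

theorem FiniteField.pow_eq_self_of_modEq {F : Type*} [Field F] [Finite F] {x : F} (hx : x ≠ 0)
    {n : ℕ} (hn : n ≡ 1 [MOD Nat.card F - 1]) : x ^ n = x := by
  have := Fintype.ofFinite F
  rw [Nat.card_eq_fintype_card] at hn
  have hx1 := FiniteField.pow_card_sub_one_eq_one x hx
  have hfin : IsOfFinOrder x :=
    isOfFinOrder_iff_pow_eq_one.mpr ⟨_, Nat.sub_pos_of_lt Fintype.one_lt_card, hx1⟩
  simpa using hfin.pow_eq_pow_iff_modEq.mpr (hn.of_dvd (orderOf_dvd_of_pow_eq_one hx1))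

variable [Fintype Fq]

theorem Polynomial.dvd_pow_sub_self_of_modEq {f b : Fq[X]} (hf : Irreducible f) (hb : ¬f ∣ b)
    {n : ℕ} (hn : n ≡ 1 [MOD Fintype.card Fq ^ f.natDegree - 1]) : f ∣ b ^ n - b := by
  have := Fact.mk hf
  let pb := AdjoinRoot.powerBasis hf.ne_zero
  have := pb.finite
  have := Module.finite_of_finite Fq (M := AdjoinRoot f)
  have hcard : Nat.card (AdjoinRoot f) = Fintype.card Fq ^ f.natDegree := by
    rw [Module.natCard_eq_pow_finrank (K := Fq), pb.finrank, AdjoinRoot.powerBasis_dim,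
      Nat.card_eq_fintype_card]
  rw [← hcard] at hn
  rw [← AdjoinRoot.mk_eq_zero, map_sub, map_pow,
    FiniteField.pow_eq_self_of_modEq (mt AdjoinRoot.mk_eq_zero.mp hb) hn, sub_self]

theorem algHom_end_pow_apply_of_modEq (φ : Fq[X] →ₐ[Fq] Module.End Fq M) {f b : Fq[X]}
    (hf : Irreducible f) {x : M} (hfx : φ f x = 0) (hbx : φ b x ≠ 0) {n : ℕ}
    (hn : n ≡ 1 [MOD Fintype.card Fq ^ f.natDegree - 1]) : (φ b ^ n) x = φ b x := by
  have hb : ¬f ∣ b := fun h => hbx (algHom_end_apply_eq_zero_of_dvd φ h hfx)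
  rw [← sub_eq_zero, ← map_pow, ← LinearMap.sub_apply, ← map_sub]
  exact algHom_end_apply_eq_zero_of_dvd φ (dvd_pow_sub_self_of_modEq hf hb hn) hfx

theorem Module.finrank_eq_of_natCard_eq_pow {n : ℕ} (h : Nat.card M = Fintype.card Fq ^ n) :
    Module.finrank Fq M = n := by
  have : Finite M := Nat.finite_of_card_ne_zero (by rw [h]; positivity)
  have : Module.Finite Fq M := Module.Finite.of_finite
  rw [Module.natCard_eq_pow_finrank (K := Fq), Nat.card_eq_fintype_card] at h
  exact Nat.pow_right_injective Fintype.one_lt_card h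

end Torsion

section LinearizedPolynomial

variable {L : Type*} [Field L] (u : L) (q : ℕ)

/-- `linPolyX u q k` is the `q`-linearized polynomial of `(u + τ)^k`, where `τ x = x ^ q`. -/
noncomputable def linPolyX : ℕ → L[X]
  | 0 => X
  | k + 1 => C u * linPolyX k + linPolyX k ^ q

noncomputable def linPoly {Fq : Type*} [CommSemiring Fq] [Algebra Fq L] (a : Fq[X]) : L[X] :=
  a.sum fun k c => C (algebraMap Fq L c) * linPolyX u q k

variable {u q}

theorem natDegree_linPolyX (hq : 1 < q) (k : ℕ) : (linPolyX u q k).natDegree = q ^ k := by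
  induction k with
  | zero => exact natDegree_X
  | succ k ih =>
    have hpow : (linPolyX u q k ^ q).natDegree = q ^ (k + 1) := by
      rw [natDegree_pow, ih, pow_succ, mul_comm]
    have hlt : (C u * linPolyX u q k).natDegree < (linPolyX u q k ^ q).natDegree :=
      calc (C u * linPolyX u q k).natDegree ≤ q ^ k := ih ▸ natDegree_C_mul_le u _
        _ < q ^ (k + 1) := Nat.pow_lt_pow_succ hq
        _ = _ := hpow.symm
    rw [linPolyX, natDegree_add_eq_right_of_natDegree_lt hlt, hpow]

theorem derivative_linPolyX (hq : (q : L) = 0) (k : ℕ) :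
    derivative (linPolyX u q k) = C (u ^ k) := by
  induction k with
  | zero => simp [linPolyX]
  | succ k ih =>
    rw [linPolyX, derivative_add, derivative_C_mul, ih, derivative_pow, hq]
    simp [pow_succ, mul_comm]

variable {Fq : Type*} [Field Fq] [Algebra Fq L]

theorem derivative_linPoly (hq : (q : L) = 0) (a : Fq[X]) :
    derivative (linPoly u q a) = C (aeval u a) := by
  simp only [linPoly, Polynomial.sum, derivative_sum, derivative_C_mul, derivative_linPolyX hq,
    ← C_mul, ← map_sum, aeval_def, eval₂_eq_sum]

theorem natDegree_linPoly (hq : 1 < q) {a : Fq[X]} (ha : a ≠ 0) :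
    (linPoly u q a).natDegree = q ^ a.natDegree := by
  have hterm : ∀ k ∈ a.support,
      (C (algebraMap Fq L (a.coeff k)) * linPolyX u q k).natDegree = q ^ k := fun k hk => by
    rw [natDegree_C_mul ((_root_.map_ne_zero _).mpr (mem_support_iff.mp hk)),
      natDegree_linPolyX hq]
  have hN := natDegree_mem_support_of_nonzero ha
  rw [linPoly, Polynomial.sum, natDegree_sum_eq_of_disjoint]
  · refine le_antisymm (Finset.sup_le fun k hk => ?_) ?_
    · exact (hterm k hk).le.trans
        (Nat.pow_le_pow_right (by omega) (le_natDegree_of_mem_supp k hk))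
    · rw [← hterm _ hN]
      exact Finset.le_sup
        (f := fun k => (C (algebraMap Fq L (a.coeff k)) * linPolyX u q k).natDegree) hN
  · intro i hi j hj hij h
    exact hij (Nat.pow_right_injective hq ((hterm i hi.1).symm.trans (h.trans (hterm j hj.1))))

variable [Fintype Fq] {φ : Fq[X] →ₐ[Fq] Module.End Fq L}
  (hφ : ∀ x, φ X x = u * x + x ^ Fintype.card Fq)
include hφ

theorem algHom_end_X_pow_apply (k : ℕ) (x : L) :
    φ (X ^ k) x = (linPolyX u (Fintype.card Fq) k).eval x := by
  induction k with
  | zero => simp [linPolyX]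
  | succ k ih => simp [pow_succ', Module.End.mul_apply, hφ, ← ih, linPolyX]

theorem algHom_end_apply_eq_eval_linPoly (a : Fq[X]) (x : L) :
    φ a x = (linPoly u (Fintype.card Fq) a).eval x := by
  conv_lhs => rw [← a.sum_C_mul_X_pow_eq]
  simp only [Polynomial.sum, linPoly, map_sum, LinearMap.coe_sum, Finset.sum_apply,
    eval_finsetSum, map_mul, Module.End.mul_apply, algHom_end_C_apply,
    algHom_end_X_pow_apply hφ, eval_mul, eval_C]

theorem natCard_ker_algHom_end [IsSepClosed L] {a : Fq[X]} (ha : aeval u a ≠ 0) :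
    Nat.card (LinearMap.ker (φ a)) = Fintype.card Fq ^ a.natDegree := by
  have hq : (Fintype.card Fq : L) = 0 := by
    rw [← map_natCast (algebraMap Fq L), Nat.cast_card_eq_zero, map_zero]
  set Q := linPoly u (Fintype.card Fq) a with hQ
  have hdeg : Q.natDegree = Fintype.card Fq ^ a.natDegree :=
    natDegree_linPoly Fintype.one_lt_card (by rintro rfl; simp at ha)
  have hQ0 : Q ≠ 0 := ne_zero_of_natDegree_gt (n := 0) (by rw [hdeg]; positivity)
  have hsep : Q.Separable := by
    rw [Separable, derivative_linPoly hq]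
    exact ⟨0, C (aeval u a)⁻¹, by rw [zero_mul, zero_add, ← C_mul, inv_mul_cancel₀ ha, C_1]⟩
  have hker : (LinearMap.ker (φ a) : Set L) = Q.rootSet L := by
    ext x
    simp [mem_rootSet', algHom_end_apply_eq_eval_linPoly hφ, hQ0, ← hQ]
  rw [← hdeg, ← card_rootSet_eq_natDegree hsep
    (IsSepClosed.splits_codomain (f := algebraMap L L) _ hsep), ← Nat.card_eq_fintype_card]
  exact Nat.card_congr (Equiv.setCongr hker)

theorem algHom_end_apply_comm (σ : L →ₐ[Fq] L) (hσ : σ u = u) (a : Fq[X]) (x : L) :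
    σ (φ a x) = φ a (σ x) := by
  simpa using intertwines_map_of_intertwines_X (φ' := φ) (RingHom.id Fq) σ.toRingHom
    (fun c => σ.commutes c) (fun y => by simp [hφ, hσ]) a x

variable (p ν : ℕ) [ExpChar Fq p] [ExpChar L p] {φ' : Fq[X] →ₐ[Fq] Module.End Fq L}
  (hφ' : ∀ x, φ' X x = u ^ p ^ ν * x + x ^ Fintype.card Fq)
include hφ'

theorem pow_expChar_pow_algHom_end_apply (a : Fq[X]) (x : L) :
    φ a x ^ p ^ ν = φ' (a.map (iterateFrobenius Fq p ν)) (x ^ p ^ ν) :=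
  intertwines_map_of_intertwines_X (iterateFrobenius Fq p ν) (iterateFrobenius L p ν)
    (fun c => by simp [iterateFrobenius_def, map_pow])
    (fun y => by
      simp only [iterateFrobenius_def, hφ, hφ', add_pow_expChar_pow, mul_pow, ← pow_mul,
        mul_comm]) a x

theorem apply_eq_algHom_end_apply_of_torsion (σ : L →+* L) {f a f' a' : Fq[X]}
    (hf : f'.map (iterateFrobenius Fq p ν) = f) (ha : a'.map (iterateFrobenius Fq p ν) = a)
    (hσ : ∀ δ, φ' f δ = 0 → σ δ = φ' a δ) {x : L} (hx : φ f' x = 0) : σ x = φ a' x := by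
  have hfrob := pow_expChar_pow_algHom_end_apply hφ p ν hφ'
  have htors : φ' f (x ^ p ^ ν) = 0 := by
    rw [← hf, ← hfrob, hx, zero_pow (expChar_pow_pos L p ν).ne']
  apply iterateFrobenius_inj L p ν
  simp only [iterateFrobenius_def]
  rw [← map_pow, hσ _ htors, hfrob, ha]

end LinearizedPolynomial

theorem twisted_carlitz_power_mod_pi_representation_general
    (p m ν : ℕ) (hp : p.Prime)
    (Fq : Type) [Field Fq] [Fintype Fq] (hq : Fintype.card Fq = p ^ m)
    (K : Type) [Field K] [Algebra Fq K] (s : K) (hs : Transcendental Fq s)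
    (L : Type) [Field L] [Algebra Fq L] [Algebra K L] [IsScalarTower Fq K L]
    [IsSepClosure K L]
    (ψ C : Polynomial Fq →ₐ[Fq] Module.End Fq L)
    (hψ : ∀ x : L, ψ Polynomial.X x = algebraMap K L s * x + x ^ Fintype.card Fq)
    (hC : ∀ x : L,
      C Polynomial.X x = algebraMap K L (s ^ p ^ ν) * x + x ^ Fintype.card Fq)
    (hat : Polynomial Fq → Polynomial Fq)
    (hhat : ∀ (a : Polynomial Fq) (k : ℕ), (hat a).coeff k ^ p ^ ν = a.coeff k)
    (π : Polynomial Fq) (hπirr : Irreducible π)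
    (i : ℕ) (hi : i * p ^ ν ≡ 1 [MOD Fintype.card Fq ^ π.natDegree - 1]) :
    let Φ : Polynomial Fq → Module.End Fq L := fun a => ψ (hat a) ^ p ^ ν
    -- (a) the filtration
    ({lam : L | (ψ (hat π) ^ 0) lam = 0} = {0} ∧
      (∀ k : ℕ, k < p ^ ν →
        {lam : L | (ψ (hat π) ^ k) lam = 0} ⊆ {lam : L | (ψ (hat π) ^ (k + 1)) lam = 0}) ∧
      {lam : L | (ψ (hat π) ^ p ^ ν) lam = 0} = {lam : L | Φ π lam = 0}) ∧
    -- (b) each V_k is an F_q-subspace of dimension k·d, stable under Gal(L/K)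
    (∀ k : ℕ, k ≤ p ^ ν →
      (∃ W : Submodule Fq L, (W : Set L) = {lam : L | (ψ (hat π) ^ k) lam = 0} ∧
        Module.finrank Fq W = k * π.natDegree) ∧
      (∀ σ : L ≃ₐ[K] L, ∀ lam : L, (ψ (hat π) ^ k) lam = 0 →
        (ψ (hat π) ^ k) (σ lam) = 0)) ∧
    -- (c) the diagonal characters are the i-th power of the mod π Carlitz character
    (∀ σ : L ≃ₐ[K] L, ∀ lam : L, ψ (hat π) lam = 0 →
      ∀ a : Polynomial Fq, (∀ δ : L, C π δ = 0 → σ δ = C a δ) →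
        σ lam = (ψ (hat a) ^ (i * p ^ ν)) lam) := by
  intro Φ
  have := Fact.mk hp
  have : CharP Fq p := charP_of_card_eq_prime_pow hq
  have : CharP L p := charP_of_injective_algebraMap (algebraMap Fq L).injective p
  have : IsSepClosed L := IsSepClosure.sep_closed K
  have hmap : ∀ a, (hat a).map (iterateFrobenius Fq p ν) = a := fun a => by
    ext k; rw [coeff_map, iterateFrobenius_def, hhat]
  have hdeg : (hat π).natDegree = π.natDegree := by
    rw [← natDegree_map (iterateFrobenius Fq p ν), hmap]
  have hirr : Irreducible (hat π) :=
    irreducible_of_irreducible_map_ringEquiv (iterateFrobeniusEquiv Fq p ν)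
      ((hmap π).symm ▸ hπirr)
  have hs' := transcendental_iff.mp
    ((transcendental_algebraMap_iff (algebraMap K L).injective).mpr hs)
  refine ⟨⟨by ext; simp, fun k _ x hx => ?_, rfl⟩,
    fun k _ => ⟨⟨LinearMap.ker (ψ (hat π) ^ k), rfl, ?_⟩, fun σ x hx => ?_⟩, ?_⟩
  · rw [Set.mem_ofPred_eq] at hx ⊢
    rw [pow_succ', Module.End.mul_apply, hx, map_zero]
  · apply Module.finrank_eq_of_natCard_eq_pow
    rw [← map_pow, natCard_ker_algHom_end hψ fun h => pow_ne_zero k hirr.ne_zero (hs' _ h),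
      natDegree_pow, hdeg]
  · rw [← map_pow] at hx ⊢
    have hσ := algHom_end_apply_comm hψ (σ.restrictScalars Fq : L →ₐ[Fq] L) (σ.commutes s)
      (hat π ^ k) x
    rwa [hx, map_zero, eq_comm] at hσ
  · intro σ x hx a ha
    have hσx := apply_eq_algHom_end_apply_of_torsion hψ p ν (by simpa only [map_pow] using hC)
      σ (hmap π) (hmap a) ha hx
    by_cases h0 : ψ (hat a) x = 0
    · obtain rfl : x = 0 := by simpa [h0] using hσx
      simp
    · rw [algHom_end_pow_apply_of_modEq ψ hirr hx h0 (hdeg ▸ hi)]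
      exact hσx

/-- Let `r = p^ν` (`ν ≥ 1`), `K` a field containing `F_q` and `s`
transcendental over `F_q`, `t := s^r`, and `L` a separable closure of `K`. Let `ψ := D_s`,
`C := D_t`, and `Φ(a) := ψ(â)^r` (the rank-`r` Drinfeld module `Φ_X = (t^{1/r} + τ)^r`).
Let `π ∈ F_q[X]` be monic irreducible of degree `d` and `i ≥ 0` with
`i·r ≡ 1 (mod q^d − 1)`. With `V_k := ker ψ(π̂)^k`:
(a) `0 = V_0 ⊆ V_1 ⊆ ⋯ ⊆ V_r = {λ : Φ(π)(λ) = 0}`;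
(b) each `V_k` is an `F_q`-subspace of dimension `k·d`, stable under `Gal(L/K)`;
(c) every `σ ∈ Gal(L/K)` acting on Carlitz `π`-torsion through `a` satisfies
`σ(λ) = ψ(â)^{i·r}(λ)` for all `λ ∈ V_1`. -/
theorem twisted_carlitz_power_mod_pi_representation
    (p m ν : ℕ) (hp : p.Prime) (hm : 0 < m) (hν : 1 ≤ ν)
    (Fq : Type) [Field Fq] [Fintype Fq] (hq : Fintype.card Fq = p ^ m)
    (K : Type) [Field K] [Algebra Fq K] (s : K) (hs : Transcendental Fq s)
    (L : Type) [Field L] [Algebra Fq L] [Algebra K L] [IsScalarTower Fq K L]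
    [IsSepClosure K L]
    (ψ C : Polynomial Fq →ₐ[Fq] Module.End Fq L)
    (hψ : ∀ x : L, ψ Polynomial.X x = algebraMap K L s * x + x ^ Fintype.card Fq)
    (hC : ∀ x : L,
      C Polynomial.X x = algebraMap K L (s ^ p ^ ν) * x + x ^ Fintype.card Fq)
    (hat : Polynomial Fq → Polynomial Fq)
    (hhat : ∀ (a : Polynomial Fq) (k : ℕ), (hat a).coeff k ^ p ^ ν = a.coeff k)
    (π : Polynomial Fq) (hπmonic : π.Monic) (hπirr : Irreducible π)
    (i : ℕ) (hi : i * p ^ ν ≡ 1 [MOD Fintype.card Fq ^ π.natDegree - 1]) :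
    let Φ : Polynomial Fq → Module.End Fq L := fun a => ψ (hat a) ^ p ^ ν
    -- (a) the filtration
    ({lam : L | (ψ (hat π) ^ 0) lam = 0} = {0} ∧
      (∀ k : ℕ, k < p ^ ν →
        {lam : L | (ψ (hat π) ^ k) lam = 0} ⊆ {lam : L | (ψ (hat π) ^ (k + 1)) lam = 0}) ∧
      {lam : L | (ψ (hat π) ^ p ^ ν) lam = 0} = {lam : L | Φ π lam = 0}) ∧
    -- (b) each V_k is an F_q-subspace of dimension k·d, stable under Gal(L/K)
    (∀ k : ℕ, k ≤ p ^ ν →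
      (∃ W : Submodule Fq L, (W : Set L) = {lam : L | (ψ (hat π) ^ k) lam = 0} ∧
        Module.finrank Fq W = k * π.natDegree) ∧
      (∀ σ : L ≃ₐ[K] L, ∀ lam : L, (ψ (hat π) ^ k) lam = 0 →
        (ψ (hat π) ^ k) (σ lam) = 0)) ∧
    -- (c) the diagonal characters are the i-th power of the mod π Carlitz character
    (∀ σ : L ≃ₐ[K] L, ∀ lam : L, ψ (hat π) lam = 0 →
      ∀ a : Polynomial Fq, (∀ δ : L, C π δ = 0 → σ δ = C a δ) →
        σ lam = (ψ (hat a) ^ (i * p ^ ν)) lam) :=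
  twisted_carlitz_power_mod_pi_representation_general p m ν hp Fq hq K s hs L ψ C hψ hC hat hhat π
    hπirr i hi
end

section
/- Let ℓ be a prime and F a finite field of characteristic ℓ. Let G be a finite group, N a normal subgroup of G which is an ℓ-group, such that the quotient C = G/N is cyclic and #C divides #F − 1. Let V be an F-vector space of dimension r on which G acts F-linearly via a representation ρ : G → GL(V), and let χ_0 : G → F^× be a group homomorphism with kernel exactly N. Then there exists a chain of G-stable subspaces 0 = V_0 ⊆ V_1 ⊆ ⋯ ⊆ V_r = V with dim_F V_s = s for 0 ≤ s ≤ r, and for each 1 ≤ s ≤ r an integer i_s with 0 ≤ i_s < #C, such that ρ(g)v − χ_0(g)^{i_s}·v ∈ V_{s−1} for all g ∈ G and v ∈ V_s. -/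
/-!
The vectors fixed by the `ℓ`-group `N` form a nonzero subspace, since an `ℓ`-group acting on a
finite `ℓ`-group fixes a nonzero element. Normality of `N` makes it `G`-stable, and `G` acts on it
through the cyclic group `G ⧸ N` of order `n`. A generator `g₀` acts with `ρ(g₀)ⁿ = 1`, and
`Xⁿ - 1` splits over `F` because `χ₀(g₀)` is a primitive `n`-th root of unity; hence `ρ(g₀)` has
an eigenvector there with eigenvalue `χ₀(g₀)ʲ` for some `j < n`, and `G` acts on its line by `χ₀ʲ`.
Dividing out this line and inducting on the dimension yields the flag.
-/

open Module Polynomial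

universe u

theorem Module.End.exists_hasEigenvalue_of_aeval_eq_zero {K V : Type*} [Field K]
    [AddCommGroup V] [Module K V] [FiniteDimensional K V] [Nontrivial V] {f : End K V}
    {p : K[X]} (hp : p.Splits) (hp0 : p ≠ 0) (hf : aeval f p = 0) :
    ∃ μ, p.IsRoot μ ∧ f.HasEigenvalue μ := by
  have hdvd : minpoly K f ∣ p := minpoly.dvd K f hf
  obtain ⟨μ, hμ⟩ := (hp.of_dvd hp0 hdvd).exists_eval_eq_zero
    (minpoly.degree_pos (Algebra.IsIntegral.isIntegral f)).ne'
  exact ⟨μ, IsRoot.dvd hμ hdvd, hasEigenvalue_iff_isRoot.2 hμ⟩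

theorem IsPGroup.invariants_ne_bot {p : ℕ} [Fact p.Prime] {P F V : Type*} [Group P]
    (hP : IsPGroup p P) [Field F] [CharP F p] [AddCommGroup V] [Module F V] [Finite V]
    [Nontrivial V] (ρ : Representation F P V) : ρ.invariants ≠ ⊥ := by
  let : MulAction P V := MulAction.compHom V ρ
  obtain ⟨v, hv⟩ := exists_ne (0 : V)
  have hpv : addOrderOf v = p := addOrderOf_eq_prime
    (by rw [← Nat.cast_smul_eq_nsmul F, CharP.cast_eq_zero, zero_smul]) hv
  obtain ⟨w, hw, hw0⟩ := hP.exists_fixed_point_of_prime_dvd_card_of_fixed_point V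
    (hpv ▸ addOrderOf_dvd_natCard v) (a := 0) fun g => map_zero (ρ g)
  exact (Submodule.ne_bot_iff _).2 ⟨w, hw, hw0.symm⟩

theorem Submodule.finrank_comap_mkQ {K V : Type*} [Field K] [AddCommGroup V] [Module K V]
    [FiniteDimensional K V] (L : Submodule K V) (p : Submodule K (V ⧸ L)) :
    finrank K (p.comap L.mkQ) = finrank K p + finrank K L := by
  let f := L.mkQ.domRestrict (p.comap L.mkQ)
  have hrange : LinearMap.range f = p := by
    rw [LinearMap.range_domRestrict, map_comap_eq_of_surjective L.mkQ_surjective]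
  have hker : LinearMap.ker f = L.comap (p.comap L.mkQ).subtype := by
    rw [LinearMap.ker_domRestrict, ker_mkQ]
  rw [← f.finrank_range_add_finrank_ker, hrange, hker,
    (comapSubtypeEquivOfLe (le_comap_mkQ L p)).finrank_eq]

namespace Representation

theorem exists_eigenvector_of_isCyclic {F H V : Type*} [Field F] [Group H] [Finite H]
    [IsCyclic H] [AddCommGroup V] [Module F V] [FiniteDimensional F V] [Nontrivial V]
    (σ : Representation F H V) {φ : H →* Fˣ} (hφ : Function.Injective φ) :
    ∃ w ≠ 0, ∃ j < Nat.card H, ∀ c, σ c w = (φ c : F) ^ j • w := by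
  obtain ⟨c₀, hc₀⟩ := IsCyclic.exists_generator (α := H)
  have hζ : IsPrimitiveRoot (φ c₀ : F) (Nat.card H) := by
    rw [IsPrimitiveRoot.coe_units_iff, ← orderOf_eq_card_of_forall_mem_zpowers hc₀,
      ← orderOf_injective φ hφ]
    exact IsPrimitiveRoot.orderOf _
  have hσ : aeval (σ c₀) (X ^ Nat.card H - C 1 : F[X]) = 0 := by
    rw [map_sub, aeval_X_pow, ← map_pow, pow_card_eq_one', map_one, aeval_C, map_one, sub_self]
  obtain ⟨μ, hμ, hμσ⟩ := Module.End.exists_hasEigenvalue_of_aeval_eq_zero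
    (X_pow_sub_one_splits hζ) (X_pow_sub_C_ne_zero Nat.card_pos 1) hσ
  obtain ⟨j, hj, rfl⟩ := hζ.eq_pow_of_pow_eq_one (by simpa [sub_eq_zero] using hμ)
  obtain ⟨w, hw⟩ := hμσ.exists_hasEigenvector
  refine ⟨w, hw.2, j, hj, fun c => ?_⟩
  obtain ⟨k, rfl⟩ := mem_powers_iff_mem_zpowers.2 (hc₀ c)
  rw [map_pow, hw.pow_apply, map_pow, Units.val_pow_eq_pow_val, ← pow_mul, ← pow_mul, mul_comm]

theorem exists_eigenvector_of_isPGroup_ker {ℓ : ℕ} [Fact ℓ.Prime] {F G V : Type*} [Field F]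
    [Finite F] [CharP F ℓ] [Group G] [AddCommGroup V] [Module F V] [FiniteDimensional F V]
    [Nontrivial V] (ρ : Representation F G V) (χ : G →* Fˣ) (hχ : IsPGroup ℓ χ.ker)
    [IsCyclic (G ⧸ χ.ker)] :
    ∃ w ≠ 0, ∃ j < Nat.card (G ⧸ χ.ker), ∀ g, ρ g w = (χ g : F) ^ j • w := by
  have : Finite (G ⧸ χ.ker) := Finite.of_injective _ (QuotientGroup.kerLift_injective χ)
  have : Finite V := Module.finite_of_finite F
  have : Nontrivial (invariants (ρ.comp χ.ker.subtype)) :=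
    Submodule.nontrivial_iff_ne_bot.2 (hχ.invariants_ne_bot _)
  obtain ⟨⟨w, _⟩, hw, j, hj, hwj⟩ :=
    (ρ.quotientToInvariants χ.ker).exists_eigenvector_of_isCyclic
      (QuotientGroup.kerLift_injective χ)
  exact ⟨w, by simpa using hw, j, hj, fun g => by simpa using congr_arg Subtype.val (hwj g)⟩

section

variable {F G : Type*} {V : Type u} [Field F] [Group G] [AddCommGroup V] [Module F V]

structure IsCharacterFlag (ρ : Representation F G V) (χ : G →* Fˣ) (n r : ℕ)
    (W : ℕ → Submodule F V) (i : ℕ → ℕ) : Prop where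
  zero : W 0 = ⊥
  top : W r = ⊤
  mono : ∀ s < r, W s ≤ W (s + 1)
  finrank_eq : ∀ s ≤ r, finrank F (W s) = s
  stable : ∀ s ≤ r, ∀ g, ∀ v ∈ W s, ρ g v ∈ W s
  exponent_lt : ∀ s, 1 ≤ s → s ≤ r → i s < n
  sub_mem : ∀ s, 1 ≤ s → s ≤ r → ∀ g, ∀ v ∈ W s, ρ g v - (χ g : F) ^ i s • v ∈ W (s - 1)

variable {ρ : Representation F G V} {χ : G →* Fˣ} {n : ℕ}

theorem isCharacterFlag_bot [Subsingleton V] :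
    IsCharacterFlag ρ χ n 0 (fun _ => ⊥) (fun _ => 0) where
  zero := rfl
  top := Subsingleton.elim _ _
  mono _ h := absurd h (Nat.not_lt_zero _)
  finrank_eq s hs := by rw [Nat.le_zero.1 hs, finrank_bot]
  stable _ _ _ v hv := by rw [(Submodule.mem_bot F).1 hv, map_zero]; exact zero_mem _
  exponent_lt _ h₁ h₂ := by omega
  sub_mem _ h₁ h₂ := by omega

theorem IsCharacterFlag.comap_mkQ [FiniteDimensional F V] {L : Submodule F V}
    {hL : ∀ g, L ≤ L.comap (ρ g)} {j r : ℕ} {W : ℕ → Submodule F (V ⧸ L)} {i : ℕ → ℕ}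
    (h : IsCharacterFlag (ρ.quotient L hL) χ n r W i) (hL1 : finrank F L = 1) (hj : j < n)
    (hLχ : ∀ g, ∀ v ∈ L, ρ g v = (χ g : F) ^ j • v) :
    IsCharacterFlag ρ χ n (r + 1) (fun s => if s = 0 then ⊥ else (W (s - 1)).comap L.mkQ)
      (fun s => if s = 1 then j else i (s - 1)) where
  zero := rfl
  top := by simp [h.top]
  mono
    | 0, _ => bot_le
    | s + 1, hs => by simpa using Submodule.comap_mono (h.mono s (by omega))
  finrank_eq
    | 0, _ => finrank_bot F V
    | s + 1, hs => by
      show finrank F ((W s).comap L.mkQ) = s + 1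
      rw [Submodule.finrank_comap_mkQ, hL1, h.finrank_eq s (by omega)]
  stable
    | 0, _, _, _, hv => by simp_all
    | s + 1, hs, g, v, hv => h.stable s (by omega) g _ hv
  exponent_lt
    | 1, _, _ => hj
    | s + 2, _, hs => h.exponent_lt (s + 1) (by omega) (by omega)
  sub_mem
    | 1, _, _, g, v, hv => by
      have hvL : v ∈ L := by simpa [h.zero] using hv
      simp [hLχ g v hvL]
    | s + 2, _, hs, g, v, hv => by
      simpa using h.sub_mem (s + 1) (by omega) (by omega) g _ hv

theorem exists_isCharacterFlag
    (hline : ∀ (U : Type u) [AddCommGroup U] [Module F U] [FiniteDimensional F U] [Nontrivial U]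
      (σ : Representation F G U), ∃ w ≠ 0, ∃ j < n, ∀ g, σ g w = (χ g : F) ^ j • w)
    (ρ : Representation F G V) [FiniteDimensional F V] :
    ∃ W i, IsCharacterFlag ρ χ n (finrank F V) W i := by
  induction hr : finrank F V generalizing V with
  | zero =>
    have : Subsingleton V := finrank_zero_iff.1 hr
    exact ⟨_, _, isCharacterFlag_bot⟩
  | succ r ih =>
    have : Nontrivial V := finrank_pos_iff (R := F).1 (by omega)
    obtain ⟨w, hw, j, hj, hwj⟩ := hline V ρ
    have hLχ : ∀ g, ∀ v ∈ F ∙ w, ρ g v = (χ g : F) ^ j • v := by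
      intro g v hv
      obtain ⟨a, rfl⟩ := Submodule.mem_span_singleton.1 hv
      rw [map_smul, hwj, smul_comm]
    have hL : ∀ g, (F ∙ w) ≤ (F ∙ w).comap (ρ g) := fun g v hv => by
      rw [Submodule.mem_comap, hLχ g v hv]
      exact Submodule.smul_mem _ _ hv
    have hL1 : finrank F (F ∙ w) = 1 := finrank_span_singleton hw
    obtain ⟨W, i, h⟩ := ih (ρ.quotient _ hL)
      (by have := Submodule.finrank_quotient_add_finrank (F ∙ w); omega)
    exact ⟨_, _, h.comap_mkQ hL1 hj hLχ⟩

end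

end Representation

theorem rasmussen_tamagawa_group_lemma_general
    (ℓ : ℕ) (hℓ : ℓ.Prime)
    (F : Type) [Field F] [Fintype F] [CharP F ℓ]
    (G : Type) [Group G]
    (N : Subgroup G) [N.Normal] (hN : IsPGroup ℓ N)
    (hcyc : IsCyclic (G ⧸ N))
    (V : Type) [AddCommGroup V] [Module F V] [FiniteDimensional F V]
    (r : ℕ) (hr : Module.finrank F V = r)
    (ρ : G →* (V →ₗ[F] V))
    (χ₀ : G →* Fˣ) (hχ₀ : χ₀.ker = N) :
    ∃ (W : ℕ → Submodule F V) (i : ℕ → ℕ),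
      W 0 = ⊥ ∧ W r = ⊤ ∧
      (∀ s : ℕ, s < r → W s ≤ W (s + 1)) ∧
      (∀ s : ℕ, s ≤ r → Module.finrank F (W s) = s) ∧
      (∀ s : ℕ, s ≤ r → ∀ g : G, ∀ v ∈ W s, ρ g v ∈ W s) ∧
      (∀ s : ℕ, 1 ≤ s → s ≤ r → i s < Nat.card (G ⧸ N)) ∧
      (∀ s : ℕ, 1 ≤ s → s ≤ r → ∀ g : G, ∀ v ∈ W s,
        ρ g v - ((χ₀ g : F) ^ i s) • v ∈ W (s - 1)) := by
  have : Fact ℓ.Prime := ⟨hℓ⟩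
  subst hχ₀ hr
  have := hcyc
  obtain ⟨W, i, h⟩ := Representation.exists_isCharacterFlag
    (fun _ _ _ _ _ σ => σ.exists_eigenvector_of_isPGroup_ker χ₀ hN) ρ
  exact ⟨W, i, h.zero, h.top, h.mono, h.finrank_eq, h.stable, h.exponent_lt, h.sub_mem⟩

/-- (Rasmussen–Tamagawa group-theoretic lemma.) Let `ℓ` be a prime and
`F` a finite field of characteristic `ℓ`. Let `G` be a finite group, `N ⊴ G` an
`ℓ`-group with `C = G/N` cyclic and `#C ∣ #F − 1`. Let `V` be an `r`-dimensional
`F`-vector space with a linear `G`-action `ρ` and `χ₀ : G → F^×` a character with kernel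
`N`. Then there is a chain of `G`-stable subspaces `0 = V_0 ⊆ ⋯ ⊆ V_r = V` with
`dim V_s = s`, and integers `0 ≤ i_s < #C` such that `G` acts on each quotient
`V_s/V_{s−1}` through `χ₀^{i_s}`. -/
theorem rasmussen_tamagawa_group_lemma
    (ℓ : ℕ) (hℓ : ℓ.Prime)
    (F : Type) [Field F] [Fintype F] [CharP F ℓ]
    (G : Type) [Group G] [Finite G]
    (N : Subgroup G) [N.Normal] (hN : IsPGroup ℓ N)
    (hcyc : IsCyclic (G ⧸ N)) (hdvd : Nat.card (G ⧸ N) ∣ Fintype.card F - 1)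
    (V : Type) [AddCommGroup V] [Module F V] [FiniteDimensional F V]
    (r : ℕ) (hr : Module.finrank F V = r)
    (ρ : G →* (V →ₗ[F] V))
    (χ₀ : G →* Fˣ) (hχ₀ : χ₀.ker = N) :
    ∃ (W : ℕ → Submodule F V) (i : ℕ → ℕ),
      W 0 = ⊥ ∧ W r = ⊤ ∧
      (∀ s : ℕ, s < r → W s ≤ W (s + 1)) ∧
      (∀ s : ℕ, s ≤ r → Module.finrank F (W s) = s) ∧
      (∀ s : ℕ, s ≤ r → ∀ g : G, ∀ v ∈ W s, ρ g v ∈ W s) ∧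
      (∀ s : ℕ, 1 ≤ s → s ≤ r → i s < Nat.card (G ⧸ N)) ∧
      (∀ s : ℕ, 1 ≤ s → s ≤ r → ∀ g : G, ∀ v ∈ W s,
        ρ g v - ((χ₀ g : F) ^ i s) • v ∈ W (s - 1)) :=
  rasmussen_tamagawa_group_lemma_general ℓ hℓ F G N hN hcyc V r hr ρ χ₀ hχ₀
end

section
/- Let ℓ be a prime, F a finite field of characteristic ℓ, V an F-vector space of dimension r, G a finite group with a faithful F-linear representation ρ : G → GL(V), and χ_0 : G → F^× a group homomorphism. Then the kernel of χ_0 is an ℓ-group if and only if there exist a chain of G-stable subspaces 0 = V_0 ⊆ V_1 ⊆ ⋯ ⊆ V_r = V with dim_F V_s = s, and integers i_s ≥ 0 (1 ≤ s ≤ r), such that ρ(g)v − χ_0(g)^{i_s}·v ∈ V_{s−1} for all g ∈ G and v ∈ V_s. -/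
/-!
If `ker χ₀` is an `ℓ`-group, then in every nonzero quotient of `V` by a `G`-stable subspace its
invariants are nonzero, since an `ℓ`-group acting on a nonzero `F`-space has a nonzero fixed vector.
`G` acts on these invariants through the cyclic group `χ₀(G)`. If `χ₀(g₀)` generates `χ₀(G)` and
has order `d`, then `ρ(g₀)^d = 1` there, and `X^d - 1` splits over `F` with roots the powers
`χ₀(g₀)^i`. So `ρ(g₀)` has an eigenvector, and every `g` acts on it by `χ₀(g)^i`.
Building the flag from such eigenlines, one quotient at a time, gives the forward direction.
Conversely, along the flag every `k ∈ ker χ₀` acts unipotently, so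
`ρ(k)^(ℓ^r) - 1 = (ρ(k) - 1)^(ℓ^r) = 0`, and faithfulness gives `k^(ℓ^r) = 1`.
-/

open Module Polynomial

theorem pow_char_pow_eq_one_of_sub_one_pow_eq_zero {F A : Type*} [CommRing F] [Ring A]
    [Algebra F A] (p : ℕ) [Fact p.Prime] [CharP F p] {a : A} {n : ℕ} (ha : (a - 1) ^ n = 0) :
    a ^ p ^ n = 1 := by
  have hX : (X - 1 : F[X]) ^ p ^ n = X ^ p ^ n - 1 := by
    rw [sub_pow_char_pow, one_pow]
  have haeval := congrArg (aeval a) hX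
  simp only [map_pow, map_sub, aeval_X, map_one] at haeval
  rw [← sub_eq_zero, ← haeval,
    ← Nat.sub_add_cancel (Nat.lt_pow_self (Fact.out : p.Prime).one_lt).le, pow_add, ha, mul_zero]

theorem Module.End.sub_one_pow_eq_zero_of_flag {R V : Type*} [Ring R] [AddCommGroup V]
    [Module R V] {A : Module.End R V} {W : ℕ → Submodule R V} {n : ℕ} (h0 : W 0 = ⊥)
    (hn : W n = ⊤) (hA : ∀ t, 1 ≤ t → t ≤ n → ∀ v ∈ W t, A v - v ∈ W (t - 1)) :
    (A - 1) ^ n = 0 := by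
  have hkill : ∀ s ≤ n, ∀ v ∈ W s, ((A - 1) ^ s) v = 0 := by
    intro s
    induction s with
    | zero => intro _ v hv; simpa [h0] using hv
    | succ s ih =>
      intro hs v hv
      rw [pow_succ, Module.End.mul_apply]
      exact ih (by omega) _ (by simpa using hA (s + 1) (by omega) hs v hv)
  exact LinearMap.ext fun v => hkill n le_rfl v (hn ▸ Submodule.mem_top)

theorem Module.End.exists_hasEigenvalue_pow_of_pow_eq_one {K M : Type*} [Field K]
    [AddCommGroup M] [Module K M] [FiniteDimensional K M] [Nontrivial M] {ζ : K} {d : ℕ}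
    (hd : 0 < d) (hζ : IsPrimitiveRoot ζ d) {T : Module.End K M} (hT : T ^ d = 1) :
    ∃ i, T.HasEigenvalue (ζ ^ i) := by
  have hdvd : minpoly K T ∣ X ^ d - C 1 := minpoly.dvd K T (by simp [hT])
  have hsplit : (minpoly K T).Splits :=
    (X_pow_sub_one_splits hζ).of_dvd (X_pow_sub_C_ne_zero hd 1) hdvd
  obtain ⟨μ, hμ⟩ := hsplit.exists_eval_eq_zero
    (minpoly.degree_pos (Algebra.IsIntegral.isIntegral T)).ne'
  have hμd : μ ^ d = 1 := by
    have := zero_dvd_iff.1 (hμ ▸ eval_dvd (x := μ) hdvd)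
    simpa [sub_eq_zero] using this
  have : NeZero d := ⟨hd.ne'⟩
  obtain ⟨i, -, rfl⟩ := hζ.eq_pow_of_pow_eq_one hμd
  exact ⟨i, Module.End.hasEigenvalue_of_isRoot hμ⟩

theorem LinearMap.sub_smul_mem_of_mem_sup_span_singleton {R V : Type*} [CommRing R]
    [AddCommGroup V] [Module R V] {A : V →ₗ[R] V} {c : R} {U : Submodule R V}
    (hU : ∀ u ∈ U, A u ∈ U) {v : V} (hv : A v - c • v ∈ U) {w : V}
    (hw : w ∈ U ⊔ Submodule.span R {v}) : A w - c • w ∈ U := by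
  obtain ⟨u, hu, _, ha, rfl⟩ := Submodule.mem_sup.1 hw
  obtain ⟨a, rfl⟩ := Submodule.mem_span_singleton.1 ha
  have hsplit : A (u + a • v) - c • (u + a • v) = (A u - c • u) + a • (A v - c • v) := by
    simp only [map_add, map_smul, smul_add, smul_sub, smul_comm c a]
    abel
  rw [hsplit]
  exact U.add_mem (U.sub_mem (hU u hu) (U.smul_mem c hu)) (U.smul_mem a hv)

namespace Representation

variable {k G V : Type*} [Field k] [Group G] [AddCommGroup V] [Module k V]
  (ρ : Representation k G V)

theorem apply_mem_invariants_comp_subtype (N : Subgroup G) [N.Normal] (g : G) {v : V}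
    (hv : v ∈ invariants (ρ.comp N.subtype)) : ρ g v ∈ invariants (ρ.comp N.subtype) := by
  intro n
  have hconj : g⁻¹ * n * g ∈ N := by simpa using ‹N.Normal›.conj_mem n n.2 g⁻¹
  calc ρ n (ρ g v) = ρ g (ρ (g⁻¹ * n * g) v) := by
        simp [← Module.End.mul_apply, ← map_mul, mul_assoc]
    _ = ρ g v := by rw [show ρ (g⁻¹ * n * g) v = v from hv ⟨_, hconj⟩]

theorem apply_eq_pow_smul_of_forall_exists_pow_eq (χ : G →* kˣ) {v : V}
    (hv : v ∈ invariants (ρ.comp χ.ker.subtype)) {g₀ : G} (hg₀ : ∀ g, ∃ m : ℕ, χ g₀ ^ m = χ g)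
    {i : ℕ} (hi : Module.End.HasEigenvector (ρ g₀) ((χ g₀ : k) ^ i) v) (g : G) :
    ρ g v = ((χ g : k) ^ i) • v := by
  obtain ⟨m, hm⟩ := hg₀ g
  have hker : (g₀ ^ m)⁻¹ * g ∈ χ.ker := by simp [hm]
  calc ρ g v = ρ (g₀ ^ m) (ρ ((g₀ ^ m)⁻¹ * g) v) := by
        rw [← Module.End.mul_apply, ← map_mul, mul_inv_cancel_left]
    _ = ((χ g₀ : k) ^ i) ^ m • v := by
        rw [show ρ ((g₀ ^ m)⁻¹ * g) v = v from hv ⟨_, hker⟩, map_pow, hi.pow_apply]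
    _ = ((χ g : k) ^ i) • v := by
        rw [← hm, ← pow_mul, mul_comm, pow_mul, Units.val_pow_eq_pow_val]

section FiniteField

variable {p : ℕ} [Fact p.Prime] [Fintype k] [CharP k p] [FiniteDimensional k V]

theorem invariants_ne_bot_of_isPGroup [Nontrivial V] (hG : IsPGroup p G) :
    ρ.invariants ≠ ⊥ := by
  let _ : MulAction G V := MulAction.compHom V ρ
  have : Finite V := Module.finite_of_finite k
  have hdvd : p ∣ Nat.card V := by
    rw [Module.natCard_eq_pow_finrank (K := k)]
    refine dvd_pow ?_ Module.finrank_pos.ne'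
    rw [Nat.card_eq_fintype_card, ← CharP.cast_eq_zero_iff k p]
    exact FiniteField.cast_card_eq_zero k
  obtain ⟨v, hv, hv0⟩ := hG.exists_fixed_point_of_prime_dvd_card_of_fixed_point V hdvd
    (a := 0) fun g => show ρ g 0 = 0 from map_zero _
  exact (Submodule.ne_bot_iff _).2 ⟨v, hv, hv0.symm⟩

variable (χ : G →* kˣ)

theorem exists_forall_apply_eq_pow_smul [Nontrivial V] (hK : IsPGroup p χ.ker) :
    ∃ i, ∃ v ≠ 0, ∀ g, ρ g v = ((χ g : k) ^ i) • v := by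
  set I := invariants (ρ.comp χ.ker.subtype)
  have hI : ∀ g, I ≤ I.comap (ρ g) := fun g _ hv => ρ.apply_mem_invariants_comp_subtype _ g hv
  have : Nontrivial I :=
    Submodule.nontrivial_iff_ne_bot.2 (invariants_ne_bot_of_isPGroup (ρ.comp χ.ker.subtype) hK)
  obtain ⟨⟨_, g₀, rfl⟩, hgen⟩ := IsCyclic.exists_generator (α := χ.range)
  have hg₀ : ∀ g, ∃ m : ℕ, χ g₀ ^ m = χ g := by
    intro g
    obtain ⟨m, hm⟩ := mem_powers_iff_mem_zpowers.2 (hgen ⟨χ g, g, rfl⟩)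
    exact ⟨m, congrArg Subtype.val hm⟩
  have hT : ρ.subrepresentation I hI g₀ ^ orderOf (χ g₀) = 1 := by
    rw [← map_pow]
    ext ⟨v, hv⟩
    exact hv ⟨g₀ ^ orderOf (χ g₀), by simp [pow_orderOf_eq_one]⟩
  obtain ⟨i, hi⟩ := Module.End.exists_hasEigenvalue_pow_of_pow_eq_one (orderOf_pos _)
    (IsPrimitiveRoot.coe_units_iff.2 (.orderOf _)) hT
  obtain ⟨⟨v, hvI⟩, hv⟩ := hi.exists_hasEigenvector
  have hv0 : v ≠ 0 := fun h => hv.2 (Subtype.ext h)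
  refine ⟨i, v, hv0, ρ.apply_eq_pow_smul_of_forall_exists_pow_eq χ hvI hg₀ ⟨?_, hv0⟩⟩
  exact Module.End.mem_eigenspace_iff.2 (congrArg Subtype.val hv.apply_eq_smul)

theorem exists_finrank_succ_of_ne_top (hK : IsPGroup p χ.ker) {U : Submodule k V}
    (hU : ∀ g, ∀ v ∈ U, ρ g v ∈ U) (hUtop : U ≠ ⊤) :
    ∃ U' : Submodule k V, U ≤ U' ∧ finrank k U' = finrank k U + 1 ∧
      (∀ g, ∀ v ∈ U', ρ g v ∈ U') ∧ ∃ i, ∀ g, ∀ v ∈ U', ρ g v - ((χ g : k) ^ i) • v ∈ U := by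
  have : Nontrivial (V ⧸ U) := Submodule.Quotient.nontrivial_iff.2 hUtop
  obtain ⟨i, q, hq0, hq⟩ := (ρ.quotient U hU).exists_forall_apply_eq_pow_smul χ hK
  obtain ⟨v, rfl⟩ := U.mkQ_surjective q
  have hvU : v ∉ U := fun h => hq0 ((Submodule.Quotient.mk_eq_zero U).2 h)
  have hv : ∀ g, ρ g v - ((χ g : k) ^ i) • v ∈ U := fun g => by
    rw [← Submodule.Quotient.mk_eq_zero, Submodule.Quotient.mk_sub, Submodule.Quotient.mk_smul,
      sub_eq_zero]
    exact hq g
  have htwist : ∀ g, ∀ w ∈ U ⊔ Submodule.span k {v}, ρ g w - ((χ g : k) ^ i) • w ∈ U :=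
    fun g _ hw => LinearMap.sub_smul_mem_of_mem_sup_span_singleton (hU g) (hv g) hw
  refine ⟨U ⊔ Submodule.span k {v}, le_sup_left, Submodule.finrank_sup_span_singleton hvU,
    fun g w hw => ?_, i, htwist⟩
  simpa using Submodule.add_mem _ (le_sup_left (a := U) (htwist g w hw))
    (Submodule.smul_mem _ ((χ g : k) ^ i) hw)

theorem exists_flag_of_isPGroup_ker (hK : IsPGroup p χ.ker) {s : ℕ} (hs : s ≤ finrank k V) :
    ∃ (W : ℕ → Submodule k V) (i : ℕ → ℕ), W 0 = ⊥ ∧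
      (∀ t < s, W t ≤ W (t + 1)) ∧
      (∀ t ≤ s, finrank k (W t) = t) ∧
      (∀ t ≤ s, ∀ g, ∀ v ∈ W t, ρ g v ∈ W t) ∧
      (∀ t, 1 ≤ t → t ≤ s → ∀ g, ∀ v ∈ W t, ρ g v - ((χ g : k) ^ i t) • v ∈ W (t - 1)) := by
  induction s with
  | zero =>
    refine ⟨fun _ => ⊥, fun _ => 0, rfl, by omega, fun t ht => ?_, fun t _ g v hv => ?_, by omega⟩
    · simp [Nat.le_zero.1 ht]
    · simp_all
  | succ s ih =>
    obtain ⟨W, i, h0, hmono, hrank, hstab, htwist⟩ := ih (by omega)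
    have hne : W s ≠ ⊤ := fun h => by
      have := hrank s le_rfl
      rw [h, finrank_top] at this
      omega
    obtain ⟨U, hWU, hU, hUstab, j, hj⟩ :=
      ρ.exists_finrank_succ_of_ne_top χ hK (hstab s le_rfl) hne
    have hW : ∀ t ≤ s, Function.update W (s + 1) U t = W t :=
      fun t ht => Function.update_of_ne (by omega) _ _
    have hi : ∀ t ≤ s, Function.update i (s + 1) j t = i t :=
      fun t ht => Function.update_of_ne (by omega) _ _
    refine ⟨Function.update W (s + 1) U, Function.update i (s + 1) j, (hW 0 (by omega)).trans h0,
      fun t ht => ?_, fun t ht => ?_, fun t ht => ?_, fun t h1 ht => ?_⟩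
    · rcases Nat.lt_succ_iff_lt_or_eq.1 ht with ht | rfl
      · rw [hW t ht.le, hW (t + 1) ht]
        exact hmono t ht
      · rw [hW t le_rfl, Function.update_self]
        exact hWU
    · rcases Nat.le_succ_iff.1 ht with ht | rfl
      · rw [hW t ht]
        exact hrank t ht
      · rw [Function.update_self, hU, hrank s le_rfl]
    · rcases Nat.le_succ_iff.1 ht with ht | rfl
      · rw [hW t ht]
        exact hstab t ht
      · rw [Function.update_self]
        exact hUstab
    · rcases Nat.le_succ_iff.1 ht with ht | rfl
      · rw [hW t ht, hi t ht, hW (t - 1) (by omega)]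
        exact htwist t h1 ht
      · rw [Function.update_self, Function.update_self, Nat.succ_sub_one, hW s le_rfl]
        exact hj

end FiniteField

end Representation

theorem ker_isPGroup_iff_upper_triangular_by_powers_of_character_general
    (ℓ : ℕ) (hℓ : ℓ.Prime)
    (F : Type) [Field F] [Fintype F] [CharP F ℓ]
    (G : Type) [Group G]
    (V : Type) [AddCommGroup V] [Module F V] [FiniteDimensional F V]
    (r : ℕ) (hr : Module.finrank F V = r)
    (ρ : G →* (V →ₗ[F] V)) (hρ : Function.Injective ρ)
    (χ₀ : G →* Fˣ) :
    IsPGroup ℓ χ₀.ker ↔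
      ∃ (W : ℕ → Submodule F V) (i : ℕ → ℕ),
        W 0 = ⊥ ∧ W r = ⊤ ∧
        (∀ s : ℕ, s < r → W s ≤ W (s + 1)) ∧
        (∀ s : ℕ, s ≤ r → Module.finrank F (W s) = s) ∧
        (∀ s : ℕ, s ≤ r → ∀ g : G, ∀ v ∈ W s, ρ g v ∈ W s) ∧
        (∀ s : ℕ, 1 ≤ s → s ≤ r → ∀ g : G, ∀ v ∈ W s,
          ρ g v - ((χ₀ g : F) ^ i s) • v ∈ W (s - 1)) := by
  have : Fact ℓ.Prime := ⟨hℓ⟩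
  constructor
  · intro hK
    obtain ⟨W, i, h0, hmono, hrank, hstab, htwist⟩ :=
      Representation.exists_flag_of_isPGroup_ker ρ χ₀ hK hr.ge
    exact ⟨W, i, h0, Submodule.eq_top_of_finrank_eq ((hrank r le_rfl).trans hr.symm),
      hmono, hrank, hstab, htwist⟩
  · rintro ⟨W, i, h0, htop, -, -, -, htwist⟩ k
    have hunip : (ρ k - 1) ^ r = 0 :=
      Module.End.sub_one_pow_eq_zero_of_flag h0 htop fun t h1 ht v hv => by
        simpa [MonoidHom.mem_ker.1 k.2] using htwist t h1 ht k v hv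
    refine ⟨r, Subtype.ext (hρ ?_)⟩
    simpa using pow_char_pow_eq_one_of_sub_one_pow_eq_zero (F := F) ℓ hunip

/-- Let `ℓ` be a prime, `F` a finite field of characteristic `ℓ`, `V`
an `r`-dimensional `F`-vector space, `G` a finite group with a faithful linear action
`ρ` on `V`, and `χ₀ : G → F^×` a character. Then `ker χ₀` is an `ℓ`-group if and only if
there is a chain of `G`-stable subspaces `0 = V_0 ⊆ ⋯ ⊆ V_r = V` with `dim V_s = s` and
integers `i_s ≥ 0` such that `G` acts on each quotient `V_s/V_{s−1}` through
`χ₀^{i_s}`. -/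
theorem ker_isPGroup_iff_upper_triangular_by_powers_of_character
    (ℓ : ℕ) (hℓ : ℓ.Prime)
    (F : Type) [Field F] [Fintype F] [CharP F ℓ]
    (G : Type) [Group G] [Finite G]
    (V : Type) [AddCommGroup V] [Module F V] [FiniteDimensional F V]
    (r : ℕ) (hr : Module.finrank F V = r)
    (ρ : G →* (V →ₗ[F] V)) (hρ : Function.Injective ρ)
    (χ₀ : G →* Fˣ) :
    IsPGroup ℓ χ₀.ker ↔
      ∃ (W : ℕ → Submodule F V) (i : ℕ → ℕ),
        W 0 = ⊥ ∧ W r = ⊤ ∧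
        (∀ s : ℕ, s < r → W s ≤ W (s + 1)) ∧
        (∀ s : ℕ, s ≤ r → Module.finrank F (W s) = s) ∧
        (∀ s : ℕ, s ≤ r → ∀ g : G, ∀ v ∈ W s, ρ g v ∈ W s) ∧
        (∀ s : ℕ, 1 ≤ s → s ≤ r → ∀ g : G, ∀ v ∈ W s,
          ρ g v - ((χ₀ g : F) ^ i s) • v ∈ W (s - 1)) :=
  ker_isPGroup_iff_upper_triangular_by_powers_of_character_general ℓ hℓ F G V r hr ρ hρ χ₀
end

section
/- Let L be a field containing the finite field F_q with q elements, and let W be a one-dimensional F_q-subspace of L. Set c_W := ∏_{λ ∈ W, λ ≠ 0} (−λ). Then every nonzero λ ∈ W satisfies λ^{q−1} = −c_W, and W = {x ∈ L : x^q + c_W·x = 0}. -/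
open Polynomial Finset

theorem prod_nonzero_eq_neg_one (K : Type) [Field K] [Fintype K] [DecidableEq K] :
    ∏ a ∈ Finset.univ.filter (fun a : K => a ≠ 0), a = -1 := by
  have h := FiniteField.prod_univ_units_id_eq_neg_one (K := K)
  have := congrArg (Units.coeHom K) h
  rw [map_prod] at this
  simp only [Units.coeHom_apply, Units.val_neg, Units.val_one] at this
  rw [← this]
  refine (Finset.prod_bij (fun (u : Kˣ) _ => (u : K)) ?_ ?_ ?_ ?_).symm
  · intro u _; simp [u.ne_zero]
  · intro a _ b _ hab; exact Units.ext hab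
  · intro a ha
    simp only [Finset.mem_filter] at ha
    exact ⟨Units.mk0 a ha.2, Finset.mem_univ _, rfl⟩
  · intro u _; rfl

/-- Let `L ⊇ F_q` be a field and `W` a one-dimensional `F_q`-subspace
of `L`. With `c_W := ∏_{λ ∈ W, λ ≠ 0} (−λ)`, every nonzero `λ ∈ W` satisfies
`λ^{q−1} = −c_W`, and `W = {x ∈ L : x^q + c_W·x = 0}`. -/
theorem one_dim_subspace_eq_kernel_of_additive_polynomial
    (p m : ℕ) (hp : p.Prime) (hm : 0 < m)
    (Fq : Type) [Field Fq] [Fintype Fq] (hq : Fintype.card Fq = p ^ m)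
    (L : Type) [Field L] [Algebra Fq L]
    (W : Submodule Fq L) (hW : Module.finrank Fq W = 1)
    (S : Finset L) (hS : ∀ x : L, x ∈ S ↔ x ∈ W ∧ x ≠ 0) :
    (∀ lam ∈ W, lam ≠ 0 → lam ^ (Fintype.card Fq - 1) = -∏ x ∈ S, (-x)) ∧
    (W : Set L) = {x : L | x ^ Fintype.card Fq + (∏ y ∈ S, (-y)) * x = 0} := by
  classical
  set q := Fintype.card Fq with hqdef
  have hq1 : 1 < q := hq ▸ Nat.one_lt_pow hm.ne' hp.one_lt
  -- generator
  obtain ⟨v, hv0, hvgen⟩ := (finrank_eq_one_iff' (K := Fq) (V := W)).mp hW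
  have hvL : (v : L) ≠ 0 := fun h => hv0 (Subtype.ext h)
  have hmem : ∀ x : L, x ∈ W ↔ ∃ a : Fq, x = a • (v : L) := by
    intro x
    constructor
    · intro hx
      obtain ⟨a, ha⟩ := hvgen ⟨x, hx⟩
      exact ⟨a, (congrArg Subtype.val ha).symm⟩
    · rintro ⟨a, rfl⟩; exact W.smul_mem a v.2
  -- description of S
  have hinj : ∀ a b : Fq, a • (v : L) = b • (v : L) → a = b := by
    intro a b hab
    rw [Algebra.smul_def, Algebra.smul_def] at hab
    have := mul_right_cancel₀ hvL hab
    exact (algebraMap Fq L).injective this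
  have hSimg : S = (Finset.univ.filter (fun a : Fq => a ≠ 0)).image
      (fun a : Fq => a • (v : L)) := by
    ext x
    simp only [hS, hmem, Finset.mem_image, Finset.mem_filter, Finset.mem_univ, true_and]
    constructor
    · rintro ⟨⟨a, rfl⟩, hx⟩
      refine ⟨a, fun ha => hx ?_, rfl⟩
      rw [ha, zero_smul]
    · rintro ⟨a, ha, rfl⟩
      refine ⟨⟨a, rfl⟩, fun h => ha ?_⟩
      rw [Algebra.smul_def] at h
      rcases mul_eq_zero.mp h with h | h
      · exact (algebraMap Fq L).injective (by simpa using h)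
      · exact absurd h hvL
  have hcardfilter : (Finset.univ.filter (fun a : Fq => a ≠ 0)).card = q - 1 := by
    rw [Finset.filter_ne']
    simp [Finset.card_erase_of_mem, hqdef]
  have hScard : S.card = q - 1 := by
    rw [hSimg, Finset.card_image_of_injOn (fun a _ b _ => hinj a b), hcardfilter]
  -- key product computation
  have hprodS : ∏ x ∈ S, x = -(v : L) ^ (q - 1) := by
    rw [hSimg, Finset.prod_image (fun a _ b _ => hinj a b)]
    simp only [Algebra.smul_def]
    rw [Finset.prod_mul_distrib, Finset.prod_const, ← map_prod, prod_nonzero_eq_neg_one,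
      hcardfilter, map_neg, map_one, neg_one_mul]
  have hc : ∏ x ∈ S, (-x) = -(v : L) ^ (q - 1) := by
    rw [← hprodS]
    refine Finset.prod_nbij' (fun x => -x) (fun x => -x) ?_ ?_ ?_ ?_ ?_
    · intro x hx
      rw [hS] at hx ⊢
      exact ⟨W.neg_mem hx.1, neg_ne_zero.mpr hx.2⟩
    · intro x hx
      rw [hS] at hx ⊢
      exact ⟨W.neg_mem hx.1, neg_ne_zero.mpr hx.2⟩
    · intro x _; ring
    · intro x _; ring
    · intro x _; rfl
  -- first claim
  have claim1 : ∀ lam ∈ W, lam ≠ 0 → lam ^ (q - 1) = (v : L) ^ (q - 1) := by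
    intro lam hlam hne
    obtain ⟨a, rfl⟩ := (hmem lam).mp hlam
    have ha : a ≠ 0 := by
      rintro rfl; exact hne (zero_smul _ _)
    rw [Algebra.smul_def, mul_pow, ← map_pow, FiniteField.pow_card_sub_one_eq_one a ha,
      map_one, one_mul]
  refine ⟨fun lam hlam hne => by rw [hc, neg_neg]; exact claim1 lam hlam hne, ?_⟩
  -- second claim
  rw [hc]
  -- forward inclusion gives T ⊆ roots
  have hforward : ∀ x ∈ W, x ^ q = (v : L) ^ (q - 1) * x := by
    intro x hx
    obtain ⟨a, rfl⟩ := (hmem x).mp hx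
    rw [Algebra.smul_def, mul_pow, ← map_pow, FiniteField.pow_card a]
    have hvq : (v : L) ^ q = (v : L) ^ (q - 1) * v := by
      rw [← pow_succ, Nat.sub_add_cancel (by omega)]
    rw [hvq]
    ring
  set P : Polynomial L := Polynomial.X ^ q - Polynomial.C ((v : L) ^ (q - 1)) * Polynomial.X
    with hP
  have hPdeg : P.degree = q := by
    have h1 : (Polynomial.C ((v : L) ^ (q - 1)) * Polynomial.X).degree <
        (Polynomial.X ^ q : Polynomial L).degree := by
      apply lt_of_le_of_lt (Polynomial.degree_C_mul_X_le _)
      rw [Polynomial.degree_X_pow]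
      exact_mod_cast hq1
    rw [hP, sub_eq_add_neg,
      Polynomial.degree_add_eq_left_of_degree_lt (by rwa [Polynomial.degree_neg]),
      Polynomial.degree_X_pow]
  have hPne : P ≠ 0 := fun h => by simp [h] at hPdeg
  have hPnat : P.natDegree = q := Polynomial.natDegree_eq_of_degree_eq_some hPdeg
  have hevalP : ∀ x : L, P.eval x = x ^ q - (v : L) ^ (q - 1) * x := by
    intro x; simp [hP]
  set T : Finset L := insert (0 : L) S with hT
  have hTW : ∀ x : L, x ∈ T ↔ x ∈ W := by
    intro x
    rw [hT, Finset.mem_insert, hS]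
    constructor
    · rintro (rfl | ⟨h, _⟩)
      · exact W.zero_mem
      · exact h
    · intro h
      by_cases hx : x = 0
      · exact Or.inl hx
      · exact Or.inr ⟨h, hx⟩
  have hTcard : T.card = q := by
    rw [hT, Finset.card_insert_of_notMem (fun h => ((hS 0).mp h).2 rfl), hScard]
    omega
  have hTsub : T ⊆ P.roots.toFinset := by
    intro x hx
    rw [Multiset.mem_toFinset, Polynomial.mem_roots hPne, Polynomial.IsRoot, hevalP]
    have := hforward x ((hTW x).mp hx)
    rw [this, sub_self]
  have hTcardle : P.roots.toFinset.card ≤ q := by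
    calc P.roots.toFinset.card ≤ Multiset.card P.roots := P.roots.toFinset_card_le
      _ ≤ P.natDegree := Polynomial.card_roots' P
      _ = q := hPnat
  have hTeq : T = P.roots.toFinset :=
    Finset.eq_of_subset_of_card_le hTsub (hTcard ▸ hTcardle)
  ext x
  simp only [SetLike.mem_coe, Set.mem_setOf_eq]
  rw [← hTW x, hTeq, Multiset.mem_toFinset, Polynomial.mem_roots hPne, Polynomial.IsRoot,
    hevalP]
  constructor
  · intro h; linear_combination h
  · intro h; linear_combination h
end

section
/- Let F = F_q(t) and let L be an infinite field extension of F (for instance L = F or an algebraic closure of F). For a ∈ F_q[t] define φ^{(a)} : L → L by φ^{(a)}(x) = t·x + a·x^q + x^{q²}. If a, a' ∈ F_q[t] and c ∈ F^× satisfy c·φ^{(a')}(x) = φ^{(a)}(c·x) for all x ∈ L, then c ∈ F_q^× and a = a'. (Hence the rank-2 Drinfeld modules φ^{(a)}_t = t + aτ + τ², a ∈ F_q[t], which all have good reduction at every finite place of F, are pairwise non-isomorphic over F, so there are infinitely many isomorphism classes of rank-2 Drinfeld modules over F with everywhere good reduction.) -/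
/-!
Expanding `c·φ^{(a')}(x) = φ^{(a)}(c·x)` leaves `(c·a' - a·c^q)·x^q + (c - c^{q²})·x^{q²} = 0` on the
infinite field `L`, so both coefficients vanish. Then `c^{q²} = c` makes `c` integral over the
integrally closed ring `F_q[t]`, hence a polynomial, and comparing degrees in `c^{q²} = c` forces it
to be a constant `u ∈ F_q^×`. Finally `c^q = c`, so `c·a' = a·c` gives `a = a'`.
-/

open Polynomial

theorem eq_zero_of_forall_mul_pow_add_mul_pow_eq_zero {L : Type*} [CommRing L] [IsDomain L]
    [Infinite L] {m n : ℕ} (hmn : m ≠ n) {α β : L} (h : ∀ x : L, α * x ^ m + β * x ^ n = 0) :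
    α = 0 ∧ β = 0 := by
  have hpoly : C α * X ^ m + C β * X ^ n = 0 := Polynomial.funext fun x => by simpa using h x
  constructor
  · simpa [coeff_X_pow, hmn, hmn.symm] using congrArg (coeff · m) hpoly
  · simpa [coeff_X_pow, hmn, hmn.symm] using congrArg (coeff · n) hpoly

theorem Polynomial.natDegree_eq_zero_of_pow_eq_self {R : Type*} [CommRing R] [NoZeroDivisors R]
    {n : ℕ} (hn : 1 < n) {y : R[X]} (h : y ^ n = y) : y.natDegree = 0 := by
  have hdeg : n * y.natDegree = y.natDegree := by rw [← natDegree_pow, h]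
  nlinarith

theorem RatFunc.exists_algebraMap_eq_of_pow_eq_self {K : Type*} [Field K] {n : ℕ} (hn : 1 < n)
    {c : RatFunc K} (h : c ^ n = c) : ∃ u : K, algebraMap K (RatFunc K) u = c := by
  have hint : IsIntegral K[X] c := by
    refine ⟨Polynomial.X ^ n - Polynomial.X, (monic_X_pow n).sub_of_left ?_, by simp [h]⟩
    rw [degree_X_pow, degree_X]
    exact_mod_cast hn
  obtain ⟨y, rfl⟩ := IsIntegrallyClosed.isIntegral_iff.mp hint
  have hy : y ^ n = y := IsFractionRing.injective K[X] (RatFunc K) (by rw [map_pow, h])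
  obtain ⟨u, rfl⟩ := natDegree_eq_zero.mp (natDegree_eq_zero_of_pow_eq_self hn hy)
  exact ⟨u, (RatFunc.algebraMap_C u).symm⟩

theorem rank_two_drinfeld_good_reduction_non_isomorphic_general
    (Fq : Type) [Field Fq] [Fintype Fq]
    (L : Type) [Field L] [Algebra (RatFunc Fq) L] [Infinite L]
    (a a' : Polynomial Fq) (c : RatFunc Fq) (hc : c ≠ 0)
    (h : ∀ x : L,
      algebraMap (RatFunc Fq) L c *
          (algebraMap (RatFunc Fq) L RatFunc.X * x
            + algebraMap (RatFunc Fq) L (algebraMap (Polynomial Fq) (RatFunc Fq) a')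
                * x ^ Fintype.card Fq
            + x ^ Fintype.card Fq ^ 2)
        = algebraMap (RatFunc Fq) L RatFunc.X * (algebraMap (RatFunc Fq) L c * x)
            + algebraMap (RatFunc Fq) L (algebraMap (Polynomial Fq) (RatFunc Fq) a)
                * (algebraMap (RatFunc Fq) L c * x) ^ Fintype.card Fq
            + (algebraMap (RatFunc Fq) L c * x) ^ (Fintype.card Fq ^ 2)) :
    (∃ u : Fqˣ, algebraMap Fq (RatFunc Fq) (u : Fq) = c) ∧ a = a' := by
  set q := Fintype.card Fq
  set A := algebraMap (RatFunc Fq) L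
  set ι := algebraMap Fq[X] (RatFunc Fq)
  have hq : 1 < q := Fintype.one_lt_card
  obtain ⟨hcoeff_q, hcoeff_q2⟩ := eq_zero_of_forall_mul_pow_add_mul_pow_eq_zero
    (by nlinarith : q ≠ q ^ 2) (α := A (c * ι a' - ι a * c ^ q)) (β := A (c - c ^ q ^ 2))
    fun x => by simp only [map_sub, map_mul, map_pow]; linear_combination h x
  have hcq2 : c ^ q ^ 2 = c := (sub_eq_zero.mp ((map_eq_zero A).mp hcoeff_q2)).symm
  obtain ⟨u, rfl⟩ := RatFunc.exists_algebraMap_eq_of_pow_eq_self (by nlinarith) hcq2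
  have hu : u ≠ 0 := by rintro rfl; exact hc (map_zero _)
  have hcq : algebraMap Fq (RatFunc Fq) u ^ q = algebraMap Fq (RatFunc Fq) u := by
    rw [← map_pow, FiniteField.pow_card]
  have hcomm := sub_eq_zero.mp ((map_eq_zero A).mp hcoeff_q)
  rw [hcq, mul_comm (ι a)] at hcomm
  exact ⟨⟨Units.mk0 u hu, rfl⟩,
    IsFractionRing.injective Fq[X] (RatFunc Fq) (mul_left_cancel₀ hc hcomm).symm⟩

/-- Let `F = F_q(t)` and `L` an infinite field extension of `F`. For
`a ∈ F_q[t]` let `φ^{(a)}(x) = t·x + a·x^q + x^{q²}` (the rank-2 Drinfeld module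
`φ^{(a)}_t = t + aτ + τ²`). If `a, a' ∈ F_q[t]` and `c ∈ F^×` satisfy
`c·φ^{(a')}(x) = φ^{(a)}(c·x)` for all `x ∈ L`, then `c ∈ F_q^×` and `a = a'`.
Hence the `φ^{(a)}` are pairwise non-isomorphic over `F`. -/
theorem rank_two_drinfeld_good_reduction_non_isomorphic
    (p m : ℕ) (hp : p.Prime) (hm : 0 < m)
    (Fq : Type) [Field Fq] [Fintype Fq] (hq : Fintype.card Fq = p ^ m)
    (L : Type) [Field L] [Algebra (RatFunc Fq) L] [Infinite L]
    (a a' : Polynomial Fq) (c : RatFunc Fq) (hc : c ≠ 0)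
    (h : ∀ x : L,
      algebraMap (RatFunc Fq) L c *
          (algebraMap (RatFunc Fq) L RatFunc.X * x
            + algebraMap (RatFunc Fq) L (algebraMap (Polynomial Fq) (RatFunc Fq) a')
                * x ^ Fintype.card Fq
            + x ^ Fintype.card Fq ^ 2)
        = algebraMap (RatFunc Fq) L RatFunc.X * (algebraMap (RatFunc Fq) L c * x)
            + algebraMap (RatFunc Fq) L (algebraMap (Polynomial Fq) (RatFunc Fq) a)
                * (algebraMap (RatFunc Fq) L c * x) ^ Fintype.card Fq
            + (algebraMap (RatFunc Fq) L c * x) ^ (Fintype.card Fq ^ 2)) :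
    (∃ u : Fqˣ, algebraMap Fq (RatFunc Fq) (u : Fq) = c) ∧ a = a' :=
  rank_two_drinfeld_good_reduction_non_isomorphic_general Fq L a a' c hc h
end
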